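/- arXiv:0904.0581 — 6 statements merged into one kernel-verified Lean document; each statement's English description precedes it below -/
import Mathlib

section
/- (Generalized Dwass formula.) Let π be a probability law on Z+×Z+ giving the number of clone and mutant children, with E[ξc] ≤ 1. For a Galton-Watson process with sterile mutants started from a ≥ 1 ancestors, the joint law of the total clone population T0 and the number of mutants M1 is P_a(T0 = n, M1 = ℓ) = (a/n)·π^{*n}_{n-a, ℓ} for all n ≥ a ≥ 1 and ℓ ≥ 0, where π^{*n} is the n-fold convolution power of π. -/
open scoped ENNReal
open MeasureTheory ProbabilityTheory

/-- `n`-fold convolution power of a law on `ℕ × ℕ` (law of the sum of `n` i.i.d. copies). -/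
noncomputable def convPow (π : PMF (ℕ × ℕ)) : ℕ → PMF (ℕ × ℕ)
  | 0 => PMF.pure (0, 0)
  | n + 1 => (convPow π n).bind fun s => π.map fun t => (s.1 + t.1, s.2 + t.2)

/-- `μ` is the joint law of `(T0, M1)` for the Galton-Watson process with sterile mutants,
one ancestor and offspring law `π`; under `a` ancestors the law of `(T0, M1)` is `convPow μ a`. -/
def branchingFixedPoint (π μ : PMF (ℕ × ℕ)) : Prop :=
  μ = π.bind fun kl => (convPow μ kl.1).map fun s => (1 + s.1, kl.2 + s.2)

/-!
Conditioning on the offspring `(k, l)` of one ancestor gives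
`P_{a+1}(T0 = n + 1, M1 = ℓ) = ∑ π(k, l) P_{k+a}(T0 = n, M1 = ℓ - l)`,
and the formula is proved by induction on `n`. Substituting it on the right produces a
convolution of `π` with `π^{*n}` weighted by `k + a`; the weight `k` is removed by the
exchangeability identity `(n + 1) E[ξc₁ ; S_{n+1} = x] = x.1 P(S_{n+1} = x)` for the partial
sums `S` of i.i.d. copies of `(ξc, ξm)`, and `m + (n + 1) a = n (a + 1)` for `m = n - a` finishes
the step.
-/

open Finset

theorem tsum_ite_le_eq_sum_Iic {M α : Type*} [Preorder M] [LocallyFiniteOrderBot M] [DecidableLE M]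
    [AddCommMonoid α] [TopologicalSpace α] (f : M → α) (x : M) :
    ∑' y, (if y ≤ x then f y else 0) = ∑ y ∈ Iic x, f y := by
  rw [tsum_eq_sum (s := Iic x) fun y hy => if_neg (by simpa using hy)]
  exact sum_congr rfl fun y hy => if_pos (by simpa using hy)

namespace PMF

variable {M : Type*}

noncomputable def conv [Add M] (p q : PMF M) : PMF M :=
  p.bind fun a => q.map (a + ·)

theorem conv_comm [AddCommMagma M] (p q : PMF M) : p.conv q = q.conv p := by
  simp only [conv, ← bind_pure_comp, Function.comp_def]
  rw [bind_comm]
  simp_rw [add_comm]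

theorem conv_assoc [AddSemigroup M] (p q r : PMF M) : (p.conv q).conv r = p.conv (q.conv r) := by
  simp only [conv, ← bind_pure_comp, Function.comp_def, bind_bind, pure_bind, add_assoc]

theorem pure_zero_conv [AddZeroClass M] (p : PMF M) : (pure 0).conv p = p := by
  simp only [conv, pure_bind, zero_add]
  exact map_id p

theorem conv_pure_zero [AddZeroClass M] (p : PMF M) : p.conv (pure 0) = p := by
  simp only [conv, pure_map, add_zero, bind_pure]

theorem bind_conv [Add M] {α : Type*} (μ : PMF α) (f : α → PMF M) (q : PMF M) :
    (μ.bind f).conv q = μ.bind fun a => (f a).conv q :=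
  bind_bind _ _ _

theorem map_add_left_conv [AddSemigroup M] (c : M) (p q : PMF M) :
    (p.map (c + ·)).conv q = (p.conv q).map (c + ·) := by
  simp only [conv, bind_map, map_bind, map_comp, Function.comp_def, add_assoc]

section Canonical

variable [AddCommMonoid M] [PartialOrder M] [CanonicallyOrderedAdd M] [Sub M] [OrderedSub M]
  [AddLeftReflectLE M] [DecidableLE M]

theorem map_add_left_apply (p : PMF M) (c x : M) :
    p.map (c + ·) x = if c ≤ x then p (x - c) else 0 := by
  rw [map_apply]
  split_ifs with hcx
  · rw [tsum_eq_single (x - c)]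
    · rw [if_pos (add_tsub_cancel_of_le hcx).symm]
    · rintro y hy
      rw [if_neg]
      rintro rfl
      exact hy (add_tsub_cancel_left c y).symm
  · refine ENNReal.tsum_eq_zero.2 fun y => if_neg ?_
    rintro rfl
    exact hcx le_self_add

theorem conv_apply [LocallyFiniteOrderBot M] (p q : PMF M) (x : M) :
    p.conv q x = ∑ y ∈ Iic x, p y * q (x - y) := by
  simp only [conv, bind_apply, map_add_left_apply, mul_ite, mul_zero]
  exact tsum_ite_le_eq_sum_Iic _ x

end Canonical

end PMF


section ConvPow

variable (ρ : PMF (ℕ × ℕ))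

theorem convPow_zero : convPow ρ 0 = PMF.pure 0 := rfl

theorem convPow_succ (n : ℕ) : convPow ρ (n + 1) = (convPow ρ n).conv ρ := rfl

theorem convPow_succ' (n : ℕ) : convPow ρ (n + 1) = ρ.conv (convPow ρ n) := by
  rw [convPow_succ, PMF.conv_comm]

theorem convPow_one : convPow ρ 1 = ρ :=
  PMF.pure_zero_conv ρ

theorem convPow_add (m n : ℕ) : convPow ρ (m + n) = (convPow ρ m).conv (convPow ρ n) := by
  induction n with
  | zero => exact (PMF.conv_pure_zero _).symm
  | succ n ih => rw [← add_assoc, convPow_succ, ih, PMF.conv_assoc, ← convPow_succ]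

theorem convPow_succ_apply (n : ℕ) (x : ℕ × ℕ) :
    convPow ρ (n + 1) x = ∑ y ∈ Iic x, ρ y * convPow ρ n (x - y) := by
  rw [convPow_succ', PMF.conv_apply]

theorem fst_mul_convPow_succ_apply (n : ℕ) (x : ℕ × ℕ) :
    x.1 * convPow ρ (n + 1) x = (n + 1) * ∑ y ∈ Iic x, y.1 * ρ y * convPow ρ n (x - y) := by
  induction n generalizing x with
  | zero =>
    rw [convPow_one, Nat.cast_zero, zero_add, one_mul, sum_eq_single x]
    · simp [convPow_zero]
    · intro y hy hyx
      have hxy : x - y ≠ 0 := fun h => hyx (le_antisymm (mem_Iic.1 hy) (tsub_eq_zero_iff_le.1 h))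
      rw [convPow_zero, PMF.pure_apply, if_neg hxy, mul_zero]
    · simp
  | succ n ih =>
    set W := ∑ y ∈ Iic x, y.1 * ρ y * convPow ρ (n + 1) (x - y)
    have hswap :
        ∑ y ∈ Iic x, ρ y * ∑ z ∈ Iic (x - y), z.1 * ρ z * convPow ρ n (x - y - z) = W := by
      simp only [W, convPow_succ_apply, mul_sum]
      rw [sum_comm']
      · refine sum_congr rfl fun z _ => sum_congr rfl fun y _ => ?_
        rw [tsub_right_comm]
        ring
      · intro y z
        simp only [mem_Iic, Prod.le_def, Prod.fst_sub, Prod.snd_sub]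
        omega
    calc (x.1 : ℝ≥0∞) * convPow ρ (n + 1 + 1) x
        = ∑ y ∈ Iic x, ((y.1 : ℝ≥0∞) + (x - y).1) * ρ y * convPow ρ (n + 1) (x - y) := by
          rw [convPow_succ_apply, mul_sum]
          refine sum_congr rfl fun y hy => ?_
          rw [← Nat.cast_add, Prod.fst_sub, Nat.add_sub_cancel' (mem_Iic.1 hy).1, mul_assoc]
      _ = W + (n + 1) *
            ∑ y ∈ Iic x, ρ y * ∑ z ∈ Iic (x - y), z.1 * ρ z * convPow ρ n (x - y - z) := by
          conv_lhs => simp only [add_mul, sum_add_distrib]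
          rw [mul_sum]
          congr 1
          refine sum_congr rfl fun y _ => ?_
          rw [mul_left_comm, ← ih]
          ring
      _ = (↑(n + 1) + 1) * W := by rw [hswap]; push_cast; ring

end ConvPow

theorem convPow_apply_eq_zero_of_fst_lt {ρ : PMF (ℕ × ℕ)} (hρ : ∀ x : ℕ × ℕ, x.1 = 0 → ρ x = 0)
    {b : ℕ} {x : ℕ × ℕ} (hx : x.1 < b) : convPow ρ b x = 0 := by
  induction b generalizing x with
  | zero => omega
  | succ b ih =>
    rw [convPow_succ_apply]
    refine sum_eq_zero fun y hy => ?_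
    by_cases hyb : y.1 = 0
    · rw [hρ y hyb, zero_mul]
    · have := (mem_Iic.1 hy).1
      rw [ih (by rw [Prod.fst_sub]; omega), mul_zero]

namespace branchingFixedPoint

variable {π μ : PMF (ℕ × ℕ)}

theorem apply_eq_zero_of_fst_eq_zero (hb : branchingFixedPoint π μ) (x : ℕ × ℕ) (hx : x.1 = 0) :
    μ x = 0 := by
  rw [hb, PMF.bind_apply]
  refine ENNReal.tsum_eq_zero.2 fun kl => ?_
  rw [PMF.map_apply]
  refine mul_eq_zero_of_right _ (ENNReal.tsum_eq_zero.2 fun s => if_neg ?_)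
  rintro rfl
  omega

theorem convPow_succ_eq_bind (hb : branchingFixedPoint π μ) (a : ℕ) :
    convPow μ (a + 1) = π.bind fun kl => (convPow μ (kl.1 + a)).map (((1 : ℕ), kl.2) + ·) := by
  rw [convPow_succ', congrArg (PMF.conv · (convPow μ a)) hb, PMF.bind_conv]
  congr 1
  funext kl
  rw [convPow_add, ← PMF.map_add_left_conv]
  rfl

theorem convPow_succ_apply_succ (hb : branchingFixedPoint π μ) (a n ℓ : ℕ) :
    convPow μ (a + 1) (n + 1, ℓ)
      = ∑' kl : ℕ × ℕ, π kl * if kl.2 ≤ ℓ then convPow μ (kl.1 + a) (n, ℓ - kl.2) else 0 := by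
  rw [hb.convPow_succ_eq_bind, PMF.bind_apply]
  refine tsum_congr fun kl => ?_
  rw [PMF.map_add_left_apply]
  simp

theorem apply_one_fst (hb : branchingFixedPoint π μ) (ℓ : ℕ) : μ (1, ℓ) = π (0, ℓ) := by
  have h := hb.convPow_succ_apply_succ 0 0 ℓ
  simp only [zero_add, add_zero, convPow_one] at h
  rw [h, tsum_eq_single (0, ℓ)]
  · simp [convPow_zero]
  · rintro ⟨k, l⟩ hkl
    split_ifs with hl
    · obtain rfl | hk := Nat.eq_zero_or_pos k
      · have : ((0, ℓ - l) : ℕ × ℕ) ≠ 0 := by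
          simp only [ne_eq, Prod.mk_eq_zero, true_and]
          simp only [ne_eq, Prod.mk.injEq, true_and] at hkl
          omega
        simp [convPow_zero, PMF.pure_apply, this]
      · rw [convPow_apply_eq_zero_of_fst_lt hb.apply_eq_zero_of_fst_eq_zero hk, mul_zero]
    · rw [mul_zero]

theorem mul_convPow_succ_apply_succ (hb : branchingFixedPoint π μ) {N b : ℕ} (hbN : b ≤ N)
    (ih : ∀ c ≤ N, ∀ ℓ, (N : ℝ≥0∞) * convPow μ c (N, ℓ) = c * convPow π N (N - c, ℓ)) (ℓ : ℕ) :
    (N : ℝ≥0∞) * convPow μ (b + 1) (N + 1, ℓ)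
      = ∑ y ∈ Iic (N - b, ℓ), ((y.1 : ℝ≥0∞) + b) * π y * convPow π N ((N - b, ℓ) - y) := by
  rw [hb.convPow_succ_apply_succ, ← ENNReal.tsum_mul_left, ← tsum_ite_le_eq_sum_Iic]
  refine tsum_congr fun ⟨k, l⟩ => ?_
  dsimp only
  by_cases hl : l ≤ ℓ
  swap
  · rw [if_neg hl, if_neg (fun h => hl (Prod.mk_le_mk.1 h).2), mul_zero, mul_zero]
  by_cases hk : k + b ≤ N
  · rw [if_pos hl, if_pos (Prod.mk_le_mk.2 ⟨by omega, hl⟩), mul_left_comm, ih _ hk,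
      Prod.mk_sub_mk, Nat.sub_sub, add_comm b k]
    push_cast
    ring
  · rw [if_pos hl, if_neg (fun h => hk (by have := (Prod.mk_le_mk.1 h).1; omega)),
      convPow_apply_eq_zero_of_fst_lt hb.apply_eq_zero_of_fst_eq_zero (by dsimp only; omega),
      mul_zero, mul_zero]

theorem mul_convPow_apply (hb : branchingFixedPoint π μ) {N c : ℕ} (hc : c ≤ N) (ℓ : ℕ) :
    (N : ℝ≥0∞) * convPow μ c (N, ℓ) = c * convPow π N (N - c, ℓ) := by
  induction N generalizing c ℓ with
  | zero =>
    obtain rfl : c = 0 := by omega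
    simp
  | succ N ih =>
    obtain _ | b := c
    · simp [convPow_zero, PMF.pure_apply]
    obtain rfl | hN := Nat.eq_zero_or_pos N
    · obtain rfl : b = 0 := by omega
      simp [convPow_one, hb.apply_one_fst]
    have hbN : b ≤ N := by omega
    set m := N - b
    have hsplit : ∑ y ∈ Iic (m, ℓ), ((y.1 : ℝ≥0∞) + b) * π y * convPow π N ((m, ℓ) - y)
        = ∑ y ∈ Iic (m, ℓ), (y.1 : ℝ≥0∞) * π y * convPow π N ((m, ℓ) - y)
          + b * convPow π (N + 1) (m, ℓ) := by
      rw [convPow_succ_apply, mul_sum, ← sum_add_distrib]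
      exact sum_congr rfl fun y _ => by ring
    have hmb : (m : ℝ≥0∞) + b = N := by exact_mod_cast Nat.sub_add_cancel hbN
    have key : (N : ℝ≥0∞) * ((N + 1) * convPow μ (b + 1) (N + 1, ℓ))
        = N * ((b + 1) * convPow π (N + 1) (m, ℓ)) := by
      calc (N : ℝ≥0∞) * ((N + 1) * convPow μ (b + 1) (N + 1, ℓ))
          = (N + 1) * (N * convPow μ (b + 1) (N + 1, ℓ)) := by ring
        _ = (N + 1) * ∑ y ∈ Iic (m, ℓ), (y.1 : ℝ≥0∞) * π y * convPow π N ((m, ℓ) - y)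
            + (N + 1) * b * convPow π (N + 1) (m, ℓ) := by
          rw [hb.mul_convPow_succ_apply_succ hbN (fun c hc ℓ => ih hc ℓ), hsplit]
          ring
        _ = (m + (N + 1) * b) * convPow π (N + 1) (m, ℓ) := by
          rw [← fst_mul_convPow_succ_apply]
          ring
        _ = N * ((b + 1) * convPow π (N + 1) (m, ℓ)) := by
          rw [← hmb]
          ring
    rw [show N + 1 - (b + 1) = m by omega]
    push_cast
    exact (ENNReal.mul_right_inj (by exact_mod_cast hN.ne') (ENNReal.natCast_ne_top N)).1 key

end branchingFixedPoint

theorem stmt2_general (π μ : PMF (ℕ × ℕ))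
    (hb : branchingFixedPoint π μ) :
    ∀ a n ℓ : ℕ, 1 ≤ a → a ≤ n →
      (convPow μ a) (n, ℓ) = ((a : ℝ≥0∞) / (n : ℝ≥0∞)) * (convPow π n) (n - a, ℓ) := by
  intro a n ℓ ha han
  have hn : (n : ℝ≥0∞) ≠ 0 := by exact_mod_cast (by omega : n ≠ 0)
  rw [← ENNReal.mul_div_right_comm, ENNReal.eq_div_iff hn (ENNReal.natCast_ne_top n)]
  exact hb.mul_convPow_apply han ℓ

/-- generalized Dwass formula:
`P_a(T0 = n, M1 = ℓ) = (a/n) · π^{*n}_{n-a, ℓ}` for `n ≥ a ≥ 1`, `ℓ ≥ 0`. -/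
theorem stmt2 (π μ : PMF (ℕ × ℕ))
    (hb : branchingFixedPoint π μ)
    (hsub : ∑' kl : ℕ × ℕ, π kl * (kl.1 : ℝ≥0∞) ≤ 1) :
    ∀ a n ℓ : ℕ, 1 ≤ a → a ≤ n →
      (convPow μ a) (n, ℓ) = ((a : ℝ≥0∞) / (n : ℝ≥0∞)) * (convPow π n) (n - a, ℓ) :=
  stmt2_general π μ hb
end

section
/- Suppose E[ξc] < 1. Then for the Galton-Watson process with neutral mutations started from a ancestors, the expected number of first-type mutants is E_a[M1] = a·E[ξm]/(1 − E[ξc]) = E[ξm]·E_a[T0]. In particular, E_1[M1] < 1, = 1, or > 1 according as E[ξc + ξm] < 1, = 1, or > 1. -/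
/-!
Conditioning on the ancestor's offspring `(k, l)`, the `k` clone subtrees are independent copies
of the whole tree, so every additive statistic `f` of `(T0, M1)` satisfies the renewal equation
`E[f] = E_π[f(1, ξm)] + E[ξc] E[f]`, hence `E[f] = E_π[f(1, ξm)] / (1 - E[ξc])` once `E[f] < ∞`.
Finiteness comes from running the same argument as an inequality for the bounded truncations
`min f N`, which are subadditive, and letting `N → ∞`. Taking `f = T0` and `f = M1` gives
`E[T0] = 1 / (1 - E[ξc])` and `E[M1] = E[ξm] / (1 - E[ξc])`; with `a` ancestors both get
multiplied by `a`.
-/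
open scoped ENNReal
open MeasureTheory ProbabilityTheory

namespace PMF

variable {α β : Type*}

lemma tsum_mul_const (p : PMF α) (c : ℝ≥0∞) : ∑' a, p a * c = c := by
  rw [ENNReal.tsum_mul_right, p.tsum_coe, one_mul]

lemma tsum_pure_mul (a : α) (g : α → ℝ≥0∞) : ∑' x, pure a x * g x = g a := by
  classical
  simp only [pure_apply, ite_mul, one_mul, zero_mul]
  exact tsum_ite_eq a g

lemma tsum_bind_mul (p : PMF α) (f : α → PMF β) (g : β → ℝ≥0∞) :
    ∑' b, p.bind f b * g b = ∑' a, p a * ∑' b, f a b * g b := by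
  simp only [bind_apply, ← ENNReal.tsum_mul_right, ← ENNReal.tsum_mul_left, mul_assoc]
  exact ENNReal.tsum_comm

lemma tsum_map_mul (p : PMF α) (h : α → β) (g : β → ℝ≥0∞) :
    ∑' b, p.map h b * g b = ∑' a, p a * g (h a) := by
  simp only [map, tsum_bind_mul, Function.comp_apply, tsum_pure_mul]

end PMF

namespace ENNReal

lemma tsum_mul_natCast_le_of_forall_min_le {α : Type*} (w : α → ℝ≥0∞) (f : α → ℕ)
    {c : ℝ≥0∞} (h : ∀ N : ℕ, ∑' x, w x * ((min (f x) N : ℕ) : ℝ≥0∞) ≤ c) :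
    ∑' x, w x * (f x : ℝ≥0∞) ≤ c := by
  rw [ENNReal.tsum_eq_iSup_sum]
  refine iSup_le fun F => le_trans (le_of_eq (Finset.sum_congr rfl fun x hx => ?_))
    ((ENNReal.sum_le_tsum F).trans (h (F.sup f)))
  rw [min_eq_left (Finset.le_sup hx)]

variable {a c r : ℝ≥0∞}

lemma le_div_one_sub_of_le_add_mul (hr : r < 1) (ha : a ≠ ∞) (h : a ≤ c + r * a) :
    a ≤ c / (1 - r) := by
  rwa [ENNReal.le_div_iff_mul_le (Or.inl (tsub_pos_of_lt hr).ne')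
    (Or.inl (sub_ne_top one_ne_top)), ENNReal.mul_sub fun _ _ => ha, mul_one,
    tsub_le_iff_right, mul_comm]

lemma div_one_sub_le_of_eq_add_mul (hr : r < 1) (h : a = c + r * a) : c / (1 - r) ≤ a := by
  have hr0 : 1 - r ≠ 0 := (tsub_pos_of_lt hr).ne'
  rw [ENNReal.div_le_iff_le_mul (Or.inl hr0) (Or.inl (sub_ne_top one_ne_top))]
  obtain rfl | ha := eq_or_ne a ∞
  · rw [ENNReal.top_mul hr0]; exact le_top
  · rw [ENNReal.mul_sub fun _ _ => ha, mul_one,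
      ENNReal.sub_eq_of_eq_add (mul_ne_top ha (hr.trans one_lt_top).ne) (by rwa [mul_comm])]

lemma div_one_sub_lt_one_iff (hr : r < 1) : c / (1 - r) < 1 ↔ r + c < 1 := by
  rw [ENNReal.div_lt_iff (Or.inl (tsub_pos_of_lt hr).ne') (Or.inl (sub_ne_top one_ne_top)),
    one_mul, (cancel_of_ne (hr.trans one_lt_top).ne).lt_tsub_iff_right, add_comm]

lemma div_one_sub_eq_one_iff (hr : r < 1) : c / (1 - r) = 1 ↔ r + c = 1 := by
  rw [div_eq_one_iff (tsub_pos_of_lt hr).ne' (sub_ne_top one_ne_top),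
    (cancel_of_ne (hr.trans one_lt_top).ne).eq_tsub_iff_add_eq_of_le hr.le, add_comm]

end ENNReal

section convPow

variable (μ : PMF (ℕ × ℕ))

lemma tsum_convPow_succ_mul (n : ℕ) (g : ℕ × ℕ → ℝ≥0∞) :
    ∑' x, convPow μ (n + 1) x * g x = ∑' s, convPow μ n s * ∑' t, μ t * g (s + t) := by
  simp only [convPow, PMF.tsum_bind_mul, PMF.tsum_map_mul]
  rfl

lemma tsum_convPow_mul_addMonoidHom (f : ℕ × ℕ →+ ℕ) (n : ℕ) :
    ∑' x, convPow μ n x * (f x : ℝ≥0∞) = n * ∑' x, μ x * (f x : ℝ≥0∞) := by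
  induction n with
  | zero => simp [convPow, Prod.mk_zero_zero]
  | succ n ih =>
    simp only [tsum_convPow_succ_mul, map_add, Nat.cast_add, mul_add, ENNReal.tsum_add,
      PMF.tsum_mul_const, ih]
    push_cast
    ring

lemma tsum_convPow_mul_le_of_subadditive {p : ℕ × ℕ → ℝ≥0∞} (h0 : p 0 = 0)
    (hadd : ∀ s t, p (s + t) ≤ p s + p t) (n : ℕ) :
    ∑' x, convPow μ n x * p x ≤ n * ∑' x, μ x * p x := by
  induction n with
  | zero => simp [convPow, Prod.mk_zero_zero, h0]
  | succ n ih =>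
    calc ∑' x, convPow μ (n + 1) x * p x
        ≤ ∑' s, convPow μ n s * ∑' t, μ t * (p s + p t) := by
          rw [tsum_convPow_succ_mul]; gcongr with s t; exact hadd s t
      _ = ∑' s, convPow μ n s * p s + ∑' t, μ t * p t := by
          simp only [mul_add, ENNReal.tsum_add, PMF.tsum_mul_const]
      _ ≤ (n + 1 : ℕ) * ∑' x, μ x * p x := by
          push_cast; rw [add_mul, one_mul]; gcongr

end convPow

namespace branchingFixedPoint

variable {π μ : PMF (ℕ × ℕ)}

lemma tsum_mul (hb : branchingFixedPoint π μ) (g : ℕ × ℕ → ℝ≥0∞) :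
    ∑' x, μ x * g x = ∑' kl, π kl * ∑' s, convPow μ kl.1 s * g ((1, kl.2) + s) := by
  conv_lhs => rw [hb]
  simp only [PMF.tsum_bind_mul, PMF.tsum_map_mul]
  rfl

lemma tsum_mul_addMonoidHom (hb : branchingFixedPoint π μ) (f : ℕ × ℕ →+ ℕ) :
    ∑' x, μ x * (f x : ℝ≥0∞)
      = ∑' kl, π kl * (f (1, kl.2) : ℝ≥0∞)
        + (∑' kl, π kl * (kl.1 : ℝ≥0∞)) * ∑' x, μ x * (f x : ℝ≥0∞) := by
  conv_lhs => rw [hb.tsum_mul]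
  simp only [map_add, Nat.cast_add, mul_add, ENNReal.tsum_add, PMF.tsum_mul_const,
    tsum_convPow_mul_addMonoidHom, ← mul_assoc, ENNReal.tsum_mul_right]

lemma tsum_mul_le_of_subadditive (hb : branchingFixedPoint π μ) {p : ℕ × ℕ → ℝ≥0∞}
    (h0 : p 0 = 0) (hadd : ∀ s t, p (s + t) ≤ p s + p t) :
    ∑' x, μ x * p x
      ≤ ∑' kl, π kl * p (1, kl.2) + (∑' kl, π kl * (kl.1 : ℝ≥0∞)) * ∑' x, μ x * p x := by
  calc ∑' x, μ x * p x
      ≤ ∑' kl, π kl * ∑' s, convPow μ kl.1 s * (p (1, kl.2) + p s) := by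
        rw [hb.tsum_mul]; gcongr with kl s; exact hadd _ s
    _ ≤ ∑' kl, π kl * (p (1, kl.2) + kl.1 * ∑' x, μ x * p x) := by
        simp only [mul_add, ENNReal.tsum_add, PMF.tsum_mul_const]
        gcongr with kl
        exact tsum_convPow_mul_le_of_subadditive μ h0 hadd kl.1
    _ = _ := by
        simp only [mul_add, ENNReal.tsum_add, ← mul_assoc, ENNReal.tsum_mul_right]

theorem tsum_mul_addMonoidHom_eq_div (hb : branchingFixedPoint π μ)
    (hsub : ∑' kl, π kl * (kl.1 : ℝ≥0∞) < 1) (f : ℕ × ℕ →+ ℕ) :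
    ∑' x, μ x * (f x : ℝ≥0∞)
      = (∑' kl, π kl * (f (1, kl.2) : ℝ≥0∞)) / (1 - ∑' kl, π kl * (kl.1 : ℝ≥0∞)) := by
  refine le_antisymm ?_
    (ENNReal.div_one_sub_le_of_eq_add_mul hsub (hb.tsum_mul_addMonoidHom f))
  refine ENNReal.tsum_mul_natCast_le_of_forall_min_le _ _ fun N => ?_
  have htrunc_ne_top : ∑' x, μ x * ((min (f x) N : ℕ) : ℝ≥0∞) ≠ ∞ :=
    ne_top_of_le_ne_top (ENNReal.natCast_ne_top N) <| le_of_le_of_eq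
      (ENNReal.tsum_le_tsum fun x => by gcongr; exact min_le_right _ _) (PMF.tsum_mul_const μ _)
  refine ENNReal.le_div_one_sub_of_le_add_mul hsub htrunc_ne_top <|
    (hb.tsum_mul_le_of_subadditive (p := fun x => ((min (f x) N : ℕ) : ℝ≥0∞)) (by simp)
      fun s t => ?_).trans ?_
  · rw [← Nat.cast_add, Nat.cast_le, map_add]; omega
  · gcongr; exact min_le_left _ _

end branchingFixedPoint

/-- if `E[ξc] < 1` then `E_a[M1] = a E[ξm]/(1 - E[ξc]) = E[ξm] E_a[T0]`,
and `E_1[M1] < 1`, `= 1`, `> 1` according as `E[ξc + ξm] < 1`, `= 1`, `> 1`. -/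
theorem stmt3 (π μ : PMF (ℕ × ℕ))
    (hb : branchingFixedPoint π μ)
    (hsub : ∑' kl : ℕ × ℕ, π kl * (kl.1 : ℝ≥0∞) < 1) :
    (∀ a : ℕ, 1 ≤ a →
      (∑' kl : ℕ × ℕ, (convPow μ a) kl * (kl.2 : ℝ≥0∞))
        = (a : ℝ≥0∞) * (∑' kl : ℕ × ℕ, π kl * (kl.2 : ℝ≥0∞))
            / (1 - ∑' kl : ℕ × ℕ, π kl * (kl.1 : ℝ≥0∞)) ∧
      (∑' kl : ℕ × ℕ, (convPow μ a) kl * (kl.2 : ℝ≥0∞))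
        = (∑' kl : ℕ × ℕ, π kl * (kl.2 : ℝ≥0∞))
            * (∑' kl : ℕ × ℕ, (convPow μ a) kl * (kl.1 : ℝ≥0∞))) ∧
    ((∑' kl : ℕ × ℕ, μ kl * (kl.2 : ℝ≥0∞)) < 1
      ↔ (∑' kl : ℕ × ℕ, π kl * ((kl.1 : ℝ≥0∞) + (kl.2 : ℝ≥0∞))) < 1) ∧
    ((∑' kl : ℕ × ℕ, μ kl * (kl.2 : ℝ≥0∞)) = 1
      ↔ (∑' kl : ℕ × ℕ, π kl * ((kl.1 : ℝ≥0∞) + (kl.2 : ℝ≥0∞))) = 1) ∧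
    (1 < (∑' kl : ℕ × ℕ, μ kl * (kl.2 : ℝ≥0∞))
      ↔ 1 < (∑' kl : ℕ × ℕ, π kl * ((kl.1 : ℝ≥0∞) + (kl.2 : ℝ≥0∞)))) := by
  have hT := hb.tsum_mul_addMonoidHom_eq_div hsub (AddMonoidHom.fst ℕ ℕ)
  have hM := hb.tsum_mul_addMonoidHom_eq_div hsub (AddMonoidHom.snd ℕ ℕ)
  have hTa := tsum_convPow_mul_addMonoidHom μ (AddMonoidHom.fst ℕ ℕ)
  have hMa := tsum_convPow_mul_addMonoidHom μ (AddMonoidHom.snd ℕ ℕ)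
  simp only [AddMonoidHom.coe_fst, AddMonoidHom.coe_snd, Nat.cast_one, PMF.tsum_mul_const]
    at hT hM hTa hMa
  have hsum : ∑' kl : ℕ × ℕ, π kl * ((kl.1 : ℝ≥0∞) + (kl.2 : ℝ≥0∞))
      = ∑' kl : ℕ × ℕ, π kl * (kl.1 : ℝ≥0∞) + ∑' kl : ℕ × ℕ, π kl * (kl.2 : ℝ≥0∞) := by
    simp only [mul_add, ENNReal.tsum_add]
  refine ⟨fun a _ => ⟨?_, ?_⟩, ?_, ?_, ?_⟩
  · rw [hMa, hM, mul_div_assoc]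
  · rw [hMa, hTa, hM, hT]
    simp only [div_eq_mul_inv, one_mul]
    ring
  · rw [hsum, hM, ENNReal.div_one_sub_lt_one_iff hsub]
  · rw [hsum, hM, ENNReal.div_one_sub_eq_one_iff hsub]
  · rw [hsum, hM, ← not_le, ← not_le, le_iff_lt_or_eq, le_iff_lt_or_eq,
      ENNReal.div_one_sub_lt_one_iff hsub, ENNReal.div_one_sub_eq_one_iff hsub]
end

section
/- If E[ξc] = 1 and E[ξm] > 0, then the expected number of first-type mutants in a Galton-Watson process with neutral mutations started from one ancestor is infinite: E_1[M1] = ∞. -/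
open scoped ENNReal
open MeasureTheory ProbabilityTheory

lemma exp_bind {α β : Type*} (p : PMF α) (f : α → PMF β) (g : β → ℝ≥0∞) :
    ∑' b, (p.bind f) b * g b = ∑' a, p a * ∑' b, f a b * g b := by
  simp only [PMF.bind_apply]
  calc ∑' b, (∑' a, p a * f a b) * g b
      = ∑' b, ∑' a, p a * f a b * g b := by
        congr 1; funext b; rw [ENNReal.tsum_mul_right]
    _ = ∑' a, ∑' b, p a * f a b * g b := ENNReal.tsum_comm
    _ = ∑' a, p a * ∑' b, f a b * g b := by
        congr 1; funext a
        rw [← ENNReal.tsum_mul_left]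
        congr 1; funext b; ring

lemma exp_map {α β : Type*} (p : PMF α) (h : α → β) (g : β → ℝ≥0∞) :
    ∑' b, (p.map h) b * g b = ∑' a, p a * g (h a) := by
  rw [PMF.map, exp_bind]
  congr 1; funext a
  congr 1
  rw [tsum_eq_single (h a)]
  · simp
  · intro b hb; simp [PMF.pure_apply, hb]

lemma exp_shift (μ : PMF (ℕ × ℕ)) (c : ℕ) :
    ∑' t : ℕ × ℕ, μ t * ((c + t.2 : ℕ) : ℝ≥0∞)
      = (c : ℝ≥0∞) + ∑' t : ℕ × ℕ, μ t * (t.2 : ℝ≥0∞) := by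
  calc ∑' t : ℕ × ℕ, μ t * ((c + t.2 : ℕ) : ℝ≥0∞)
      = ∑' t : ℕ × ℕ, (μ t * (c : ℝ≥0∞) + μ t * (t.2 : ℝ≥0∞)) := by
        congr 1; funext t; push_cast; ring
    _ = (∑' t : ℕ × ℕ, μ t * (c : ℝ≥0∞)) + ∑' t : ℕ × ℕ, μ t * (t.2 : ℝ≥0∞) :=
        ENNReal.tsum_add
    _ = (c : ℝ≥0∞) + ∑' t : ℕ × ℕ, μ t * (t.2 : ℝ≥0∞) := by
        rw [ENNReal.tsum_mul_right, μ.tsum_coe, one_mul]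

lemma exp_conv (μ : PMF (ℕ × ℕ)) (n : ℕ) :
    ∑' s : ℕ × ℕ, convPow μ n s * (s.2 : ℝ≥0∞)
      = (n : ℝ≥0∞) * ∑' t : ℕ × ℕ, μ t * (t.2 : ℝ≥0∞) := by
  induction n with
  | zero => simp [convPow]
  | succ n ih =>
    set m := ∑' t : ℕ × ℕ, μ t * (t.2 : ℝ≥0∞) with hm
    calc ∑' s : ℕ × ℕ, convPow μ (n+1) s * (s.2 : ℝ≥0∞)
        = ∑' s : ℕ × ℕ, convPow μ n s *
            ∑' t : ℕ × ℕ, μ t * (((s.2 + t.2 : ℕ)) : ℝ≥0∞) := by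
          rw [show convPow μ (n+1)
              = (convPow μ n).bind fun s => μ.map fun t => (s.1 + t.1, s.2 + t.2) from rfl,
            exp_bind]
          congr 1; funext s
          rw [exp_map]
      _ = ∑' s : ℕ × ℕ, convPow μ n s * ((s.2 : ℝ≥0∞) + m) := by
          congr 1; funext s; rw [exp_shift]
      _ = (∑' s : ℕ × ℕ, convPow μ n s * (s.2 : ℝ≥0∞))
            + (∑' s : ℕ × ℕ, convPow μ n s * m) := by
          rw [← ENNReal.tsum_add]; congr 1; funext s; ring
      _ = (n : ℝ≥0∞) * m + m := by
          rw [ih, ENNReal.tsum_mul_right, (convPow μ n).tsum_coe, one_mul]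
      _ = ((n + 1 : ℕ) : ℝ≥0∞) * m := by push_cast; ring

/-- if `E[ξc] = 1` and `E[ξm] > 0` then `E_1[M1] = ∞`. -/
theorem stmt4 (π μ : PMF (ℕ × ℕ))
    (hb : branchingFixedPoint π μ)
    (hcrit : ∑' kl : ℕ × ℕ, π kl * (kl.1 : ℝ≥0∞) = 1)
    (hmut : 0 < ∑' kl : ℕ × ℕ, π kl * (kl.2 : ℝ≥0∞)) :
    ∑' kl : ℕ × ℕ, μ kl * (kl.2 : ℝ≥0∞) = ⊤ := by
  set m := ∑' kl : ℕ × ℕ, μ kl * (kl.2 : ℝ≥0∞) with hm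
  set b := ∑' kl : ℕ × ℕ, π kl * (kl.2 : ℝ≥0∞) with hbdef
  have hb' : μ = π.bind fun kl => (convPow μ kl.1).map fun s => (1 + s.1, kl.2 + s.2) := hb
  have key : m = b + m := by
    conv_lhs => rw [hm, hb']
    calc ∑' kl : ℕ × ℕ,
          ((π.bind fun kl => (convPow μ kl.1).map fun s => (1 + s.1, kl.2 + s.2)) kl)
            * (kl.2 : ℝ≥0∞)
        = ∑' kl : ℕ × ℕ, π kl * ∑' s : ℕ × ℕ,
            convPow μ kl.1 s * (((kl.2 + s.2 : ℕ)) : ℝ≥0∞) := by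
          rw [exp_bind]
          congr 1; funext kl
          rw [exp_map]
      _ = ∑' kl : ℕ × ℕ, π kl * ((kl.2 : ℝ≥0∞) + (kl.1 : ℝ≥0∞) * m) := by
          congr 1; funext kl
          rw [exp_shift, exp_conv]
      _ = (∑' kl : ℕ × ℕ, π kl * (kl.2 : ℝ≥0∞))
            + ∑' kl : ℕ × ℕ, π kl * (kl.1 : ℝ≥0∞) * m := by
          rw [← ENNReal.tsum_add]; congr 1; funext kl; ring
      _ = b + m := by rw [ENNReal.tsum_mul_right, hcrit, one_mul]
  by_contra htop
  have : m + 0 = m + b := by rw [add_zero, add_comm]; exact key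
  have hb0 : (0 : ℝ≥0∞) = b := (ENNReal.add_right_inj htop).mp this
  exact hmut.ne' hb0.symm
end

section
/- Let (ξ_n = (ξc_n, ξm_n))_{n≥1} be i.i.d. with law π, where E[ξc] ≤ 1, and let S^{(c)}_n = a + ξc_1 + ... + ξc_n − n be the associated downward-skip-free random walk started at a ≥ 1. Let ς(0) = inf{n ≥ 0 : S^{(c)}_n = 0} and Σ(0) = Σ_{i=1}^{ς(0)} ξm_i. Then (ς(0), Σ(0)) under P_a has the same distribution as (T0, M1), the total type-0 population and number of first-type mutants of the Galton-Watson process with neutral mutations started from a ancestors and reproduction law π. -/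
open scoped ENNReal
open MeasureTheory ProbabilityTheory

/-!
Read the steps `ξ 0, ξ 1, …` as a depth-first exploration of a forest with `a` roots, the `i`-th
explored individual having `(ξ i).1` children and `(ξ i).2` mutant children. The walk then counts
the individuals discovered but not yet explored, so it first hits `0` at time `n` with marks
summing to `m` exactly when the first `n` steps encode a whole forest with `n` individuals and `m`
mutants. Splitting off the first step, the probability of this event obeys the same recursion in
`a` and `n` as `convPow μ a (n, m)`, which follows from the fixed-point equation for `μ` by
splitting off the first root. Hence the law of `(ς, Σ)` dominates the probability measure
`convPow μ a` on every atom, and so equals it.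
-/

namespace PMF

variable {α β : Type*}

lemma map_apply_of_injective {f : α → β} (hf : f.Injective) (p : PMF α) (a : α) :
    p.map f (f a) = p a := by
  rw [map_apply, tsum_eq_single a fun a' ha' => if_neg (hf.ne ha').symm, if_pos rfl]

lemma map_apply_of_notMem_range {f : α → β} (p : PMF α) {b : β} (hb : b ∉ Set.range f) :
    p.map f b = 0 := by
  rw [map_apply]
  exact ENNReal.tsum_eq_zero.2 fun a => if_neg fun h => hb ⟨a, h.symm⟩

lemma eq_of_forall_le {p q : PMF α} (h : ∀ a, p a ≤ q a) : p = q := by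
  by_contra hne
  obtain ⟨a, ha⟩ : ∃ a, p a < q a := by
    by_contra! hge
    exact hne (PMF.ext fun a => le_antisymm (h a) (hge a))
  have := ENNReal.tsum_lt_tsum (p.tsum_coe ▸ ENNReal.one_ne_top) h ha
  rw [p.tsum_coe, q.tsum_coe] at this
  exact this.false

lemma toMeasure_eq_of_le [MeasurableSpace α] [MeasurableSingletonClass α] [Countable α]
    (p : PMF α) (ν : Measure α) [IsProbabilityMeasure ν] (h : ∀ a, p a ≤ ν {a}) :
    p.toMeasure = ν := by
  rw [← ν.toPMF_toMeasure]
  exact congrArg toMeasure (eq_of_forall_le fun a => (h a).trans_eq (ν.toPMF_apply a).symm)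

end PMF

lemma convPow_add_s6 (μ : PMF (ℕ × ℕ)) (x y : ℕ) :
    convPow μ (x + y) = (convPow μ x).bind fun s => (convPow μ y).map (s + ·) := by
  induction y with
  | zero => simp [convPow, PMF.pure_map, ← Prod.zero_eq_mk]
  | succ y ih =>
    rw [← add_assoc, convPow, ih, convPow, PMF.bind_bind]
    simp only [PMF.map_bind, PMF.bind_map, PMF.map_comp, Function.comp_def]
    congr! 5 with s t u
    ext <;> simp [add_assoc]

lemma convPow_one_s6 (μ : PMF (ℕ × ℕ)) : convPow μ 1 = μ := by
  simp only [convPow, PMF.pure_bind, zero_add, Prod.mk.eta]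
  exact PMF.map_id μ

lemma convPow_succ_eq_bind {π μ : PMF (ℕ × ℕ)} (hb : branchingFixedPoint π μ) (b : ℕ) :
    convPow μ (b + 1) = π.bind fun kl => (convPow μ (kl.1 + b)).map ((1, kl.2) + ·) := by
  calc convPow μ (b + 1) = μ.bind fun s => (convPow μ b).map (s + ·) := by
        rw [add_comm, convPow_add_s6, convPow_one_s6]
    _ = (π.bind fun kl => (convPow μ kl.1).map fun s => (1 + s.1, kl.2 + s.2)).bind
          fun s => (convPow μ b).map (s + ·) := by rw [← hb]
    _ = _ := by
        simp only [PMF.bind_bind, PMF.bind_map, convPow_add_s6, PMF.map_bind, PMF.map_comp,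
          Function.comp_def]
        congr! 4 with kl s
        simp only [← add_assoc]
        rfl

lemma convPow_succ_apply_zero {π μ : PMF (ℕ × ℕ)} (hb : branchingFixedPoint π μ)
    (b m : ℕ) : convPow μ (b + 1) (0, m) = 0 := by
  rw [convPow_succ_eq_bind hb, PMF.bind_apply]
  refine ENNReal.tsum_eq_zero.2 fun kl => ?_
  rw [PMF.map_apply_of_notMem_range _ fun ⟨s, hs⟩ => by simp [Prod.ext_iff] at hs, mul_zero]

lemma convPow_succ_apply_succ {π μ : PMF (ℕ × ℕ)} (hb : branchingFixedPoint π μ)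
    (b n m : ℕ) :
    convPow μ (b + 1) (n + 1, m) =
      ∑' kl : ℕ × ℕ,
        π kl * if kl.2 ≤ m then convPow μ (b + kl.1) (n, m - kl.2) else 0 := by
  rw [convPow_succ_eq_bind hb, PMF.bind_apply]
  congr! 2 with kl
  split_ifs with hm
  · obtain ⟨d, rfl⟩ := Nat.exists_eq_add_of_le hm
    rw [show ((n + 1, kl.2 + d) : ℕ × ℕ) = (1, kl.2) + (n, d) by
        rw [Prod.mk_add_mk, add_comm 1],
      PMF.map_apply_of_injective (add_right_injective _), add_comm, Nat.add_sub_cancel_left]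
  · refine congrArg _ (PMF.map_apply_of_notMem_range _ ?_)
    rintro ⟨s, hs⟩
    simp only [Prod.ext_iff, Prod.fst_add, Prod.snd_add] at hs
    omega

-- `FirstPassage a n m v`: the walk started at `a` with increments `(v i).1 - 1` first hits `0` at
-- step `n`, and the marks `(v i).2` of these `n` steps add up to `m`.
def FirstPassage : (a n m : ℕ) → (Fin n → ℕ × ℕ) → Prop
  | 0, 0, m, _ => m = 0
  | b + 1, n + 1, m, v => (v 0).2 ≤ m ∧ FirstPassage (b + (v 0).1) n (m - (v 0).2) (Fin.tail v)
  | _, _, _, _ => False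

lemma firstPassage_cons {b n m : ℕ} (kl : ℕ × ℕ) (v : Fin n → ℕ × ℕ) :
    FirstPassage (b + 1) (n + 1) m (Fin.cons kl v) ↔
      kl.2 ≤ m ∧ FirstPassage (b + kl.1) n (m - kl.2) v :=
  Iff.rfl

noncomputable def firstPassageWeight (π : PMF (ℕ × ℕ)) (a n m : ℕ) : ℝ≥0∞ :=
  ∑' v : Fin n → ℕ × ℕ, {v | FirstPassage a n m v}.indicator (fun v => ∏ i, π (v i)) v

section FirstPassageWeight

variable (π : PMF (ℕ × ℕ))

lemma firstPassageWeight_zero (n m : ℕ) :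
    firstPassageWeight π 0 n m = PMF.pure (0, 0) (n, m) := by
  cases n <;> simp [firstPassageWeight, FirstPassage, Set.indicator, PMF.pure_apply]

lemma firstPassageWeight_succ_zero (b m : ℕ) : firstPassageWeight π (b + 1) 0 m = 0 := by
  simp [firstPassageWeight, FirstPassage]

lemma firstPassageWeight_succ_succ (b n m : ℕ) :
    firstPassageWeight π (b + 1) (n + 1) m =
      ∑' kl : ℕ × ℕ,
        π kl * if kl.2 ≤ m then firstPassageWeight π (b + kl.1) n (m - kl.2) else 0 := by
  rw [firstPassageWeight, ← (Fin.consEquiv fun _ => ℕ × ℕ).tsum_eq, ENNReal.tsum_prod']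
  refine tsum_congr fun kl => ?_
  split_ifs with hm
  · rw [firstPassageWeight, ← ENNReal.tsum_mul_left]
    refine tsum_congr fun v => ?_
    have hmem : Fin.consEquiv _ (kl, v) ∈ {v | FirstPassage (b + 1) (n + 1) m v} ↔
        v ∈ {v | FirstPassage (b + kl.1) n (m - kl.2) v} :=
      (firstPassage_cons kl v).trans (and_iff_right hm)
    by_cases hv : v ∈ {v | FirstPassage (b + kl.1) n (m - kl.2) v}
    · rw [Set.indicator_of_mem (hmem.2 hv), Set.indicator_of_mem hv, Fin.prod_univ_succ]
      rfl
    · rw [Set.indicator_of_notMem (mt hmem.1 hv), Set.indicator_of_notMem hv, mul_zero]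
  · simp [Fin.consEquiv, firstPassage_cons, hm]

end FirstPassageWeight

theorem firstPassageWeight_eq_convPow {π μ : PMF (ℕ × ℕ)} (hb : branchingFixedPoint π μ)
    (a n m : ℕ) : firstPassageWeight π a n m = convPow μ a (n, m) := by
  induction n generalizing a m with
  | zero =>
    cases a with
    | zero => exact firstPassageWeight_zero π 0 m
    | succ b => rw [firstPassageWeight_succ_zero, convPow_succ_apply_zero hb]
  | succ n ih =>
    cases a with
    | zero => exact firstPassageWeight_zero π (n + 1) m
    | succ b => simp only [firstPassageWeight_succ_succ, convPow_succ_apply_succ hb, ih]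

def walk (a : ℕ) (u : ℕ → ℕ × ℕ) (j : ℕ) : ℤ :=
  a + ∑ i ∈ Finset.range j, ((u i).1 : ℤ) - j

lemma walk_succ_succ (b : ℕ) (u : ℕ → ℕ × ℕ) (j : ℕ) :
    walk (b + 1) u (j + 1) = walk (b + (u 0).1) (fun i => u (i + 1)) j := by
  simp only [walk, Finset.sum_range_succ']
  push_cast
  ring

theorem FirstPassage.isLeast_walk_and_sum {u : ℕ → ℕ × ℕ} {a n m : ℕ}
    (h : FirstPassage a n m fun i => u i) :
    IsLeast {j | walk a u j = 0} n ∧ ∑ i ∈ Finset.range n, (u i).2 = m := by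
  induction n generalizing a m u with
  | zero =>
    cases a with
    | zero =>
      exact ⟨⟨by simp [walk], fun j _ => j.zero_le⟩,
        by simpa [FirstPassage, eq_comm] using h⟩
    | succ b => exact h.elim
  | succ n ih =>
    cases a with
    | zero => exact h.elim
    | succ b =>
      obtain ⟨hm, h⟩ := h
      simp only [Fin.val_zero] at hm h
      obtain ⟨⟨hn, hleast⟩, hsum⟩ := ih (u := fun i => u (i + 1)) h
      refine ⟨⟨(walk_succ_succ b u n).trans hn, ?_⟩, ?_⟩
      · rintro (_ | j) hj
        · have h0 : walk (b + 1) u 0 = b + 1 := by simp [walk]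
          exact absurd (h0.symm.trans hj) (by omega)
        · exact Nat.succ_le_succ (hleast ((walk_succ_succ b u j).symm.trans hj))
      · rw [Finset.sum_range_succ', hsum]
        omega

lemma measurable_sInf_setOf_nat {Ω : Type*} [MeasurableSpace Ω] {p : ℕ → Ω → Prop}
    (hp : ∀ n, MeasurableSet {ω | p n ω}) : Measurable fun ω => sInf {n | p n ω} := by
  classical
  -- Adjoining "`p` never holds" makes a least witness always exist; it is `0`, matching the
  -- junk value `sInf ∅ = 0`, exactly when `p` never holds.
  have hq : ∀ ω, ∃ n, p n ω ∨ ∀ k, ¬ p k ω := fun ω => by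
    by_cases h : ∃ n, p n ω
    · exact h.imp fun n => Or.inl
    · exact ⟨0, Or.inr (not_exists.1 h)⟩
  have hsInf : ∀ ω, sInf {n | p n ω} = Nat.find (hq ω) := fun ω => by
    have hfind : sInf {n | p n ω ∨ ∀ k, ¬ p k ω} = Nat.find (hq ω) :=
      (Nat.sInf_def (hq ω)).trans (Nat.find_congr' Iff.rfl)
    rw [← hfind]
    by_cases h : ∃ n, p n ω
    · obtain ⟨n, hn⟩ := h
      congr 1
      ext k
      exact ⟨Or.inl, fun hk => hk.resolve_right fun hall => hall n hn⟩
    · rw [Nat.sInf_eq_zero.2 (Or.inr (by simpa [Set.eq_empty_iff_forall_notMem] using h)),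
        Nat.sInf_eq_zero.2 (Or.inl (Or.inr (not_exists.1 h)))]
  have hq_meas : ∀ k, MeasurableSet {ω | p k ω ∨ ∀ j, ¬ p j ω} := fun k => by
    rw [show {ω | p k ω ∨ ∀ j, ¬ p j ω} = {ω | p k ω} ∪ ⋂ j, {ω | p j ω}ᶜ by
      ext; simp]
    exact (hp k).union (.iInter fun j => (hp j).compl)
  simp_rw [hsInf]
  exact measurable_find hq hq_meas

theorem ProbabilityTheory.iIndepFun.measure_preimage_eq_tsum {Ω ι α : Type*}
    [MeasurableSpace Ω] [Fintype ι] [MeasurableSpace α] [MeasurableSingletonClass α]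
    [Countable α] {P : Measure Ω} {π : PMF α} {ξ : ι → Ω → α}
    (hmeas : ∀ i, Measurable (ξ i)) (hindep : iIndepFun ξ P)
    (hdist : ∀ i, P.map (ξ i) = π.toMeasure) (s : Set (ι → α)) :
    P ((fun ω i => ξ i ω) ⁻¹' s) = ∑' v, s.indicator (fun v => ∏ i, π (v i)) v := by
  have hfiber (v : ι → α) :
      (fun ω i => ξ i ω) ⁻¹' {v} = ⋂ i ∈ Finset.univ, ξ i ⁻¹' {v i} := by
    ext ω
    simp [funext_iff]
  have hfiber_meas (v : ι → α) : MeasurableSet ((fun ω i => ξ i ω) ⁻¹' {v}) :=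
    hfiber v ▸ Finset.univ.measurableSet_biInter fun i _ => hmeas i (measurableSet_singleton _)
  have hfiber_measure (v : ι → α) : P ((fun ω i => ξ i ω) ⁻¹' {v}) = ∏ i, π (v i) := by
    rw [hfiber, hindep.measure_inter_preimage_eq_mul _ fun i _ => measurableSet_singleton _]
    refine Finset.prod_congr rfl fun i _ => ?_
    rw [← Measure.map_apply (hmeas i) (measurableSet_singleton _), hdist,
      PMF.toMeasure_apply_singleton _ _ (measurableSet_singleton _)]
  rw [← tsum_measure_preimage_singleton s.to_countable fun v _ => hfiber_meas v]
  simp_rw [hfiber_measure]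
  exact tsum_subtype s fun v => ∏ i, π (v i)

lemma measurable_sum_range_of_measurable {Ω M : Type*} [MeasurableSpace Ω] [AddCommMonoid M]
    [MeasurableSpace M] [MeasurableAdd₂ M] {f : ℕ → Ω → M} (hf : ∀ i, Measurable (f i))
    {τ : Ω → ℕ} (hτ : Measurable τ) :
    Measurable fun ω => ∑ i ∈ Finset.range (τ ω), f i ω := by
  have hsum : Measurable fun p : Ω × ℕ => ∑ i ∈ Finset.range p.2, f i p.1 :=
    measurable_from_prod_countable_left fun n =>
      Finset.measurable_sum (Finset.range n) fun i _ => hf i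
  exact hsum.comp (measurable_id.prodMk hτ)

theorem measure_firstPassage_eq_convPow {Ω : Type*} [MeasurableSpace Ω] {P : Measure Ω}
    {π μ : PMF (ℕ × ℕ)} (hb : branchingFixedPoint π μ) {ξ : ℕ → Ω → ℕ × ℕ}
    (hmeas : ∀ i, Measurable (ξ i)) (hindep : iIndepFun ξ P)
    (hdist : ∀ i, P.map (ξ i) = π.toMeasure) (a n m : ℕ) :
    P {ω | FirstPassage a n m fun i : Fin n => ξ i ω} = convPow μ a (n, m) := by
  rw [← firstPassageWeight_eq_convPow hb, firstPassageWeight]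
  exact (hindep.precomp Fin.val_injective).measure_preimage_eq_tsum (fun i : Fin n => hmeas i)
    (fun i : Fin n => hdist i) _

theorem stmt6_general {Ω : Type*} [MeasurableSpace Ω] (P : Measure Ω) [IsProbabilityMeasure P]
    (π μ : PMF (ℕ × ℕ))
    (hb : branchingFixedPoint π μ)
    (ξ : ℕ → Ω → ℕ × ℕ)
    (hmeas : ∀ i, Measurable (ξ i))
    (hindep : iIndepFun ξ P)
    (hdist : ∀ i, Measure.map (ξ i) P = π.toMeasure)
    (a : ℕ)
    (S : ℕ → Ω → ℤ)
    (hS : ∀ n ω, S n ω = (a : ℤ) + (∑ i ∈ Finset.range n, ((ξ i ω).1 : ℤ)) - n)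
    (ς : Ω → ℕ) (hς : ∀ ω, ς ω = sInf {n : ℕ | S n ω = 0})
    (Sig0 : Ω → ℕ) (hSig : ∀ ω, Sig0 ω = ∑ i ∈ Finset.range (ς ω), (ξ i ω).2) :
    Measure.map (fun ω => (ς ω, Sig0 ω)) P = (convPow μ a).toMeasure := by
  have hS_meas (n : ℕ) : Measurable (S n) := by
    rw [funext (hS n)]
    fun_prop
  have hς_meas : Measurable ς := by
    rw [funext hς]
    exact measurable_sInf_setOf_nat fun n => hS_meas n (measurableSet_singleton 0)
  have hSig_meas : Measurable Sig0 := by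
    rw [funext hSig]
    exact measurable_sum_range_of_measurable (fun i => (hmeas i).snd) hς_meas
  have hpair_meas := hς_meas.prodMk hSig_meas
  have := Measure.isProbabilityMeasure_map (μ := P) hpair_meas.aemeasurable
  refine (PMF.toMeasure_eq_of_le _ _ fun ⟨n, m⟩ => ?_).symm
  calc convPow μ a (n, m) = P {ω | FirstPassage a n m fun i : Fin n => ξ i ω} :=
        (measure_firstPassage_eq_convPow hb hmeas hindep hdist a n m).symm
    _ ≤ P ((fun ω => (ς ω, Sig0 ω)) ⁻¹' {(n, m)}) := measure_mono fun ω hω => by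
        obtain ⟨hleast, hsum⟩ := FirstPassage.isLeast_walk_and_sum (u := fun i => ξ i ω) hω
        have hςω : ς ω = n := by
          rw [hς]
          simp_rw [hS]
          exact hleast.csInf_eq
        simp [hςω, hSig, hsum]
    _ = _ := (Measure.map_apply hpair_meas (measurableSet_singleton _)).symm

/-- for the downward-skip-free walk `S n = a + ξc₁ + ⋯ + ξcₙ - n` built from
i.i.d. pairs `(ξc, ξm)` with law `π` (with `E[ξc] ≤ 1`), the pair `(ς(0), Σ(0))` — first
hitting time of `0` and the sum of the marks `ξm` up to that time — has the same law as
`(T0, M1)` under `P_a`. -/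
theorem stmt6 {Ω : Type*} [MeasurableSpace Ω] (P : Measure Ω) [IsProbabilityMeasure P]
    (π μ : PMF (ℕ × ℕ))
    (hb : branchingFixedPoint π μ)
    (hsub : ∑' kl : ℕ × ℕ, π kl * (kl.1 : ℝ≥0∞) ≤ 1)
    (ξ : ℕ → Ω → ℕ × ℕ)
    (hmeas : ∀ i, Measurable (ξ i))
    (hindep : iIndepFun ξ P)
    (hdist : ∀ i, Measure.map (ξ i) P = π.toMeasure)
    (a : ℕ) (ha : 1 ≤ a)
    (S : ℕ → Ω → ℤ)
    (hS : ∀ n ω, S n ω = (a : ℤ) + (∑ i ∈ Finset.range n, ((ξ i ω).1 : ℤ)) - n)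
    (ς : Ω → ℕ) (hς : ∀ ω, ς ω = sInf {n : ℕ | S n ω = 0})
    (Sig0 : Ω → ℕ) (hSig : ∀ ω, Sig0 ω = ∑ i ∈ Finset.range (ς ω), (ξ i ω).2) :
    Measure.map (fun ω => (ς ω, Sig0 ω)) P = (convPow μ a).toMeasure :=
  stmt6_general P π μ hb ξ hmeas hindep hdist a S hS ς hς Sig0 hSig
end

section
/- Define recursively T̃_0 = ς(0), M̃_1 = Σ(0), and for k ≥ 1, T̃_0 + ... + T̃_k = ς(M̃_1 + ... + M̃_k) and M̃_1 + ... + M̃_{k+1} = Σ(T̃_0 + ... + T̃_k), where ς(j) = inf{n : S^{(c)}_n = −j} and Σ(j) = Σ_{i=1}^{ς(j)} ξm_i. Then for every a ≥ 1, the chain ((T̃_k, M̃_{k+1}))_{k≥0} has the same law as the chain ((T_k, M_{k+1}))_{k≥0} of type-k population sizes and mutant counts of the Galton-Watson process with neutral mutations started from a ancestors. -/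
open scoped ENNReal
open MeasureTheory ProbabilityTheory

/-!
The law `μ` is determined by `π`. The first-step decomposition of the walk started at `c + 1`
and the branching property of `convPow μ` satisfy the same recursion, so by induction on time
`convPow μ c (t, m)` is the probability that the walk started at `c` first hits `0` at time `t`,
having collected `m` mutants on the way. These probabilities sum to one, so almost surely the
walk reaches every level. On that event, cutting the i.i.d. sequence `(ξ n)` at the times
`τ_0 < τ_1 < ⋯` turns the recursion defining `(T̃_k, M̃_{k+1})` into consecutive excursions, the
`k`-th one started from `M̃_k`. They occupy disjoint blocks of letters, so the probability of
prescribed values is the product of the excursion probabilities.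
-/

namespace NeutralMutations

open scoped Classical

section Convolution

variable {M : Type*} [AddCommMonoid M]

noncomputable def conv (p q : PMF M) : PMF M :=
  p.bind fun x => q.map (x + ·)

theorem conv_eq_bind_bind (p q : PMF M) :
    conv p q = p.bind fun x => q.bind fun y => PMF.pure (x + y) := rfl

theorem conv_comm (p q : PMF M) : conv p q = conv q p := by
  simp only [conv_eq_bind_bind]
  rw [PMF.bind_comm]
  simp only [add_comm]

theorem conv_assoc (p q r : PMF M) : conv (conv p q) r = conv p (conv q r) := by
  simp only [conv_eq_bind_bind, PMF.bind_bind, PMF.pure_bind, add_assoc]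

theorem conv_pure_zero (p : PMF M) : conv p (PMF.pure 0) = p := by
  simp [conv, PMF.pure_map, PMF.bind_pure]

theorem bind_conv {β : Type*} (p : PMF β) (f : β → PMF M) (q : PMF M) :
    conv (p.bind f) q = p.bind fun b => conv (f b) q :=
  PMF.bind_bind _ _ _

theorem map_add_conv (v : M) (p q : PMF M) :
    conv (p.map (v + ·)) q = (conv p q).map (v + ·) := by
  simp only [conv, PMF.bind_map, PMF.map_bind, PMF.map_comp]
  congr 1
  funext x
  simp only [Function.comp_def, add_assoc]

theorem map_add_apply_add [IsLeftCancelAdd M] (p : PMF M) (v x : M) :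
    (p.map (v + ·)) (v + x) = p x := by
  rw [PMF.map_apply, tsum_eq_single x fun y hy => if_neg fun h => hy (add_left_cancel h).symm,
    if_pos rfl]

theorem map_add_apply_of_forall_ne (p : PMF M) {v y : M} (h : ∀ x, y ≠ v + x) :
    (p.map (v + ·)) y = 0 := by
  rw [PMF.map_apply, ENNReal.tsum_eq_zero]
  exact fun x => if_neg (h x)

end Convolution

section ConvPow

variable {π μ : PMF (ℕ × ℕ)}

theorem convPow_succ (μ : PMF (ℕ × ℕ)) (n : ℕ) : convPow μ (n + 1) = conv (convPow μ n) μ := rfl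

theorem convPow_add (μ : PMF (ℕ × ℕ)) (x y : ℕ) :
    convPow μ (x + y) = conv (convPow μ x) (convPow μ y) := by
  induction y with
  | zero => exact (conv_pure_zero _).symm
  | succ y ih => rw [← add_assoc, convPow_succ, convPow_succ, ih, conv_assoc]

/-- The branching property: the first of `c + 1` ancestors contributes itself, its mutant
children, and the clonal progeny of its clonal children, who act as `x.1` further ancestors. -/
theorem convPow_succ_eq_bind (hb : branchingFixedPoint π μ) (c : ℕ) :
    convPow μ (c + 1) = π.bind fun x => (convPow μ (c + x.1)).map ((1, x.2) + ·) := by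
  rw [convPow_succ, conv_comm]
  nth_rewrite 1 [hb]
  rw [bind_conv]
  congr 1
  funext x
  rw [show (fun s : ℕ × ℕ => (1 + s.1, x.2 + s.2)) = ((1, x.2) + ·) from rfl, map_add_conv,
    ← convPow_add, add_comm]

theorem convPow_succ_apply_zero (hb : branchingFixedPoint π μ) (c M : ℕ) :
    convPow μ (c + 1) (0, M) = 0 := by
  rw [convPow_succ_eq_bind hb, PMF.bind_apply, ENNReal.tsum_eq_zero]
  intro x
  rw [map_add_apply_of_forall_ne _ fun s h => by simp [Prod.ext_iff] at h; omega, mul_zero]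

theorem convPow_succ_apply_succ (hb : branchingFixedPoint π μ) (c T M : ℕ) :
    convPow μ (c + 1) (T + 1, M)
      = ∑' x, π x * if x.2 ≤ M then convPow μ (c + x.1) (T, M - x.2) else 0 := by
  rw [convPow_succ_eq_bind hb, PMF.bind_apply]
  refine tsum_congr fun x => ?_
  split_ifs with hM
  · rw [show ((T + 1, M) : ℕ × ℕ) = (1, x.2) + (T, M - x.2) by ext <;> simp <;> omega,
      map_add_apply_add]
  · rw [map_add_apply_of_forall_ne _ fun s h => by simp [Prod.ext_iff] at h; omega]

end ConvPow

section Words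

variable {α : Type*}

def cons (x : α) (w : ℕ → α) : ℕ → α
  | 0 => x
  | i + 1 => w i

def shift (n : ℕ) (w : ℕ → α) : ℕ → α := fun i => w (n + i)

@[simp] theorem shift_zero (w : ℕ → α) : shift 0 w = w := funext fun i => congrArg w (zero_add i)

@[simp] theorem shift_succ_cons (n : ℕ) (x : α) (w : ℕ → α) :
    shift (n + 1) (cons x w) = shift n w :=
  funext fun i => by rw [shift, shift, add_right_comm]; rfl

def extend [Inhabited α] {n : ℕ} (v : Fin n → α) : ℕ → α :=
  fun i => if h : i < n then v ⟨i, h⟩ else default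

theorem extend_of_lt [Inhabited α] {n : ℕ} (v : Fin n → α) {i : ℕ} (h : i < n) :
    extend v i = v ⟨i, h⟩ :=
  dif_pos h

theorem extend_cons [Inhabited α] {n : ℕ} (x : α) (v : Fin n → α) :
    extend (Fin.cons x v : Fin (n + 1) → α) = cons x (extend v) := by
  funext i
  cases i with
  | zero => rfl
  | succ i =>
    by_cases h : i < n
    · rw [extend_of_lt _ (by omega)]
      exact (Fin.cons_succ (α := fun _ => α) x v ⟨i, h⟩).trans (extend_of_lt v h).symm
    · simp [extend, cons, h]

theorem setOf_eq_preimage_extend [Inhabited α] {Ω : Type*} {ξ : ℕ → Ω → α} {n : ℕ}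
    {p : (ℕ → α) → Prop} (hp : DependsOn p (Set.Iio n)) :
    {ω | p (ξ · ω)} = (fun ω (i : Fin n) => ξ i ω) ⁻¹' {v | p (extend v)} :=
  Set.ext fun ω => (hp fun _ hi => (extend_of_lt (fun j : Fin n => ξ j ω) hi).symm).to_iff

/-- Meaningful when `p` depends only on the first `n` letters: the others are set to `default`. -/
noncomputable def wordProb [Inhabited α] (π : PMF α) (n : ℕ) (p : (ℕ → α) → Prop) : ℝ≥0∞ :=
  ∑' v : Fin n → α, if p (extend v) then ∏ i, π (v i) else 0

theorem dependsOn_cons {n : ℕ} {p : (ℕ → α) → Prop} (hp : DependsOn p (Set.Iio (n + 1)))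
    (x : α) : DependsOn (fun w => p (cons x w)) (Set.Iio n) := by
  intro w w' h
  refine hp fun i hi => ?_
  cases i with
  | zero => rfl
  | succ i => exact h i (by simpa using hi)

theorem dependsOn_and_shift {n₁ n₂ : ℕ} {p r : (ℕ → α) → Prop} (hp : DependsOn p (Set.Iio n₁))
    (hr : DependsOn r (Set.Iio n₂)) :
    DependsOn (fun w => p w ∧ r (shift n₁ w)) (Set.Iio (n₁ + n₂)) := by
  intro w w' h
  simp only [Set.mem_Iio] at h
  exact congrArg₂ And (hp fun i hi => h i (by simp at hi; omega))
    (hr (x := shift n₁ w) (y := shift n₁ w') fun i hi => h _ (by simp at hi; omega))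

variable [Inhabited α] (π : PMF α)

theorem wordProb_zero (p : (ℕ → α) → Prop) :
    wordProb π 0 p = if p (fun _ => default) then 1 else 0 := by
  have : extend (Fin.elim0 : Fin 0 → α) = fun _ => default := funext fun i => dif_neg (by omega)
  rw [wordProb, tsum_eq_single Fin.elim0 fun v hv => (hv (Subsingleton.elim _ _)).elim, this]
  simp

theorem wordProb_succ (n : ℕ) (p : (ℕ → α) → Prop) :
    wordProb π (n + 1) p = ∑' x, π x * wordProb π n (fun w => p (cons x w)) := by
  rw [wordProb, ← (Fin.consEquiv fun _ => α).tsum_eq, ENNReal.tsum_prod']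
  refine tsum_congr fun x => ?_
  rw [wordProb, ← ENNReal.tsum_mul_left]
  refine tsum_congr fun v => ?_
  rw [show (Fin.consEquiv fun _ => α) (x, v) = Fin.cons x v from rfl, extend_cons,
    Fin.prod_univ_succ]
  simp only [Fin.cons_zero, Fin.cons_succ, mul_ite, mul_zero]

theorem wordProb_eq_zero {n : ℕ} {p : (ℕ → α) → Prop} (h : ∀ w, ¬ p w) : wordProb π n p = 0 :=
  ENNReal.tsum_eq_zero.mpr fun _ => if_neg (h _)

theorem wordProb_split {n₁ : ℕ} {p : (ℕ → α) → Prop} (hp : DependsOn p (Set.Iio n₁)) (n₂ : ℕ)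
    (r : (ℕ → α) → Prop) :
    wordProb π (n₁ + n₂) (fun w => p w ∧ r (shift n₁ w)) = wordProb π n₁ p * wordProb π n₂ r := by
  induction n₁ generalizing p with
  | zero =>
    have hconst : ∀ w, p w = p fun _ => default := fun w => hp (by simp)
    rw [zero_add, wordProb_zero]
    split_ifs with h
    · simp [hconst, h]
    · rw [zero_mul]
      exact wordProb_eq_zero π fun w hw => h (hconst w ▸ hw.1)
  | succ n ih =>
    rw [add_right_comm, wordProb_succ, wordProb_succ, ← ENNReal.tsum_mul_right]
    refine tsum_congr fun x => ?_
    rw [mul_assoc, ← ih (dependsOn_cons hp x)]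
    simp only [shift_succ_cons]

end Words

section Measure

variable {α Ω : Type*} [Inhabited α] [Countable α] [MeasurableSpace α] [MeasurableSingletonClass α]
  [MeasurableSpace Ω] {P : Measure Ω} {ξ : ℕ → Ω → α} {n : ℕ} {p : (ℕ → α) → Prop}

theorem measurableSet_setOf (hmeas : ∀ i, Measurable (ξ i)) (hp : DependsOn p (Set.Iio n)) :
    MeasurableSet {ω | p (ξ · ω)} := by
  rw [setOf_eq_preimage_extend hp]
  exact (measurable_pi_lambda (fun ω (i : Fin n) => ξ i ω) fun i => hmeas i)
    (Set.to_countable {v : Fin n → α | p (extend v)}).measurableSet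

theorem measure_eq_wordProb [IsProbabilityMeasure P] {π : PMF α} (hmeas : ∀ i, Measurable (ξ i))
    (hindep : iIndepFun ξ P) (hdist : ∀ i, P.map (ξ i) = π.toMeasure)
    (hp : DependsOn p (Set.Iio n)) :
    P {ω | p (ξ · ω)} = wordProb π n p := by
  have hV : Measurable fun ω (i : Fin n) => ξ i ω := measurable_pi_lambda _ fun i => hmeas i
  have hlaw : P.map (fun ω (i : Fin n) => ξ i ω) = Measure.pi fun _ => π.toMeasure := by
    rw [(iIndepFun_iff_map_fun_eq_pi_map (f := fun (i : Fin n) => ξ i)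
      fun i => (hmeas i).aemeasurable).mp
      (hindep.precomp Fin.val_injective)]
    simp only [hdist]
  have hA : MeasurableSet {v : Fin n → α | p (extend v)} := (Set.to_countable _).measurableSet
  rw [setOf_eq_preimage_extend hp, ← Measure.map_apply hV hA, hlaw,
    ← Measure.tsum_indicator_apply_singleton _ _ hA]
  refine tsum_congr fun v => ?_
  simp [Set.indicator_apply, PMF.toMeasure_apply_singleton]

end Measure

section Walk

variable {w : ℕ → ℕ × ℕ} {b c t : ℕ}

def clonalSum (w : ℕ → ℕ × ℕ) (n : ℕ) : ℕ := ∑ i ∈ Finset.range n, (w i).1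

def mutantSum (w : ℕ → ℕ × ℕ) (n : ℕ) : ℕ := ∑ i ∈ Finset.range n, (w i).2

theorem clonalSum_add (w : ℕ → ℕ × ℕ) (t n : ℕ) :
    clonalSum w (t + n) = clonalSum w t + clonalSum (shift t w) n :=
  Finset.sum_range_add _ _ _

theorem mutantSum_add (w : ℕ → ℕ × ℕ) (t n : ℕ) :
    mutantSum w (t + n) = mutantSum w t + mutantSum (shift t w) n :=
  Finset.sum_range_add _ _ _

theorem clonalSum_cons_succ (x : ℕ × ℕ) (w : ℕ → ℕ × ℕ) (n : ℕ) :
    clonalSum (cons x w) (n + 1) = x.1 + clonalSum w n := by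
  rw [clonalSum, Finset.sum_range_succ', add_comm]
  rfl

theorem mutantSum_cons_succ (x : ℕ × ℕ) (w : ℕ → ℕ × ℕ) (n : ℕ) :
    mutantSum (cons x w) (n + 1) = x.2 + mutantSum w n := by
  rw [mutantSum, Finset.sum_range_succ', add_comm]
  rfl

theorem dependsOn_clonalSum (n : ℕ) : DependsOn (clonalSum · n) (Set.Iio n) :=
  fun _ _ h => Finset.sum_congr rfl fun i hi => by rw [h i (by simpa using hi)]

theorem dependsOn_mutantSum (n : ℕ) : DependsOn (mutantSum · n) (Set.Iio n) :=
  fun _ _ h => Finset.sum_congr rfl fun i hi => by rw [h i (by simpa using hi)]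

/-- The walk `n ↦ c + clonalSum w n - n` first hits `0` at time `t`. For `c = a + j` and
`w = (ξ · ω)` this says `ς(j) = t`. -/
def IsFirstPassage (c t : ℕ) (w : ℕ → ℕ × ℕ) : Prop :=
  c + clonalSum w t = t ∧ ∀ n < t, n < c + clonalSum w n

noncomputable def firstPassage (w : ℕ → ℕ × ℕ) (c : ℕ) : ℕ :=
  sInf {n | c + clonalSum w n = n}

def HitsEveryLevel (w : ℕ → ℕ × ℕ) : Prop :=
  ∀ c, ∃ t, IsFirstPassage c t w

theorem IsFirstPassage.firstPassage_eq (h : IsFirstPassage c t w) : firstPassage w c = t := by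
  refine le_antisymm (Nat.sInf_le h.1) (not_lt.mp fun hlt => ?_)
  have hmem : c + clonalSum w (firstPassage w c) = firstPassage w c :=
    Nat.sInf_mem (s := {n | c + clonalSum w n = n}) ⟨t, h.1⟩
  exact (h.2 _ hlt).ne hmem.symm

theorem IsFirstPassage.unique {t' : ℕ} (h : IsFirstPassage c t w) (h' : IsFirstPassage c t' w) :
    t = t' :=
  h.firstPassage_eq.symm.trans h'.firstPassage_eq

theorem dependsOn_isFirstPassage (c t : ℕ) : DependsOn (IsFirstPassage c t) (Set.Iio t) := by
  intro w w' h
  have hsum : ∀ n ≤ t, clonalSum w n = clonalSum w' n :=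
    fun n hn => dependsOn_clonalSum n fun i hi => h i (lt_of_lt_of_le hi hn)
  exact congrArg₂ And (by rw [hsum t le_rfl])
    (propext (forall₂_congr fun n hn => by rw [hsum n hn.le]))

theorem not_isFirstPassage_zero_succ : ¬ IsFirstPassage 0 (t + 1) w :=
  fun h => (h.2 0 t.succ_pos).ne rfl

theorem not_isFirstPassage_succ_zero : ¬ IsFirstPassage (c + 1) 0 w :=
  fun h => absurd h.1 (by simp [clonalSum])

theorem isFirstPassage_cons_succ (x : ℕ × ℕ) :
    IsFirstPassage (c + 1) (t + 1) (cons x w) ↔ IsFirstPassage (c + x.1) t w := by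
  simp only [IsFirstPassage, Nat.forall_lt_succ_left, clonalSum_cons_succ]
  refine and_congr (by omega) ?_
  exact (and_iff_right (by simp [clonalSum])).trans (forall₂_congr fun n _ => by omega)

theorem IsFirstPassage.isFirstPassage_shift {T : ℕ} (h₁ : IsFirstPassage b t w)
    (h₂ : IsFirstPassage (b + c) T w) : t ≤ T ∧ IsFirstPassage c (T - t) (shift t w) := by
  obtain ⟨hbt, hb⟩ := h₁
  obtain ⟨hT, hbc⟩ := h₂
  have hle : t ≤ T := not_lt.mp fun hlt => by have := hb T hlt; omega
  have hsplit : ∀ n, clonalSum w (t + n) = clonalSum w t + clonalSum (shift t w) n :=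
    clonalSum_add w t
  refine ⟨hle, ?_, fun n hn => ?_⟩
  · have := hsplit (T - t)
    rw [Nat.add_sub_cancel' hle] at this
    omega
  · have := hbc (t + n) (by omega)
    have := hsplit n
    omega

end Walk

namespace HitsEveryLevel

variable {w : ℕ → ℕ × ℕ}

theorem isFirstPassage_firstPassage (hw : HitsEveryLevel w) (c : ℕ) :
    IsFirstPassage c (firstPassage w c) w := by
  obtain ⟨t, ht⟩ := hw c
  rwa [ht.firstPassage_eq]

theorem firstPassage_eq_iff (hw : HitsEveryLevel w) {c t : ℕ} :
    firstPassage w c = t ↔ IsFirstPassage c t w :=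
  ⟨fun h => h ▸ hw.isFirstPassage_firstPassage c, IsFirstPassage.firstPassage_eq⟩

theorem isFirstPassage_shift (hw : HitsEveryLevel w) (b c : ℕ) :
    IsFirstPassage c (firstPassage w (b + c) - firstPassage w b) (shift (firstPassage w b) w) :=
  ((hw.isFirstPassage_firstPassage b).isFirstPassage_shift
    (hw.isFirstPassage_firstPassage (b + c))).2

theorem shift_firstPassage (hw : HitsEveryLevel w) (b : ℕ) :
    HitsEveryLevel (shift (firstPassage w b) w) :=
  fun c => ⟨_, hw.isFirstPassage_shift b c⟩

theorem firstPassage_add (hw : HitsEveryLevel w) (b c : ℕ) :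
    firstPassage w (b + c) = firstPassage w b + firstPassage (shift (firstPassage w b) w) c := by
  have hle := ((hw.isFirstPassage_firstPassage b).isFirstPassage_shift
    (hw.isFirstPassage_firstPassage (b + c))).1
  rw [(hw.isFirstPassage_shift b c).firstPassage_eq]
  omega

end HitsEveryLevel

section Excursion

def Excursion (c t m : ℕ) (w : ℕ → ℕ × ℕ) : Prop :=
  IsFirstPassage c t w ∧ mutantSum w t = m

def Excursions : ℕ → ℕ → (ℕ → ℕ) → (ℕ → ℕ) → (ℕ → ℕ × ℕ) → Prop
  | c, 0, t, m, w => Excursion c (t 0) (m 0) w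
  | c, k + 1, t, m, w => Excursion c (t 0) (m 0) w ∧
      Excursions (m 0) k (fun i => t (i + 1)) (fun i => m (i + 1)) (shift (t 0) w)

theorem dependsOn_excursion (c t m : ℕ) : DependsOn (Excursion c t m) (Set.Iio t) := by
  intro w w' h
  exact congrArg₂ And (dependsOn_isFirstPassage c t h)
    (congrArg (· = m) (dependsOn_mutantSum t h))

theorem dependsOn_excursions (c k : ℕ) (t m : ℕ → ℕ) :
    DependsOn (Excursions c k t m) (Set.Iio (∑ i ∈ Finset.range (k + 1), t i)) := by
  induction k generalizing c t m with
  | zero =>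
    rw [zero_add, Finset.sum_range_one]
    exact dependsOn_excursion c (t 0) (m 0)
  | succ k ih =>
    rw [Finset.sum_range_succ', add_comm _ (t 0)]
    exact dependsOn_and_shift (dependsOn_excursion _ _ _) (ih _ _ _)

theorem excursion_cons_succ {c t M : ℕ} (x : ℕ × ℕ) (w : ℕ → ℕ × ℕ) :
    Excursion (c + 1) (t + 1) M (cons x w) ↔ x.2 ≤ M ∧ Excursion (c + x.1) t (M - x.2) w := by
  rw [Excursion, Excursion, isFirstPassage_cons_succ, mutantSum_cons_succ]
  constructor
  · rintro ⟨h, hm⟩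
    exact ⟨by omega, h, by omega⟩
  · rintro ⟨hle, h, hm⟩
    exact ⟨h, by omega⟩

theorem HitsEveryLevel.excursion_iff {w : ℕ → ℕ × ℕ} (hw : HitsEveryLevel w) {c t m : ℕ} :
    Excursion c t m w ↔ firstPassage w c = t ∧ mutantSum w (firstPassage w c) = m := by
  rw [hw.firstPassage_eq_iff, Excursion]
  exact ⟨fun h => ⟨h.1, h.1.firstPassage_eq ▸ h.2⟩, fun h => ⟨h.1, h.1.firstPassage_eq ▸ h.2⟩⟩

noncomputable def excursionProb (π : PMF (ℕ × ℕ)) (c : ℕ) (s : ℕ × ℕ) : ℝ≥0∞ :=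
  wordProb π s.1 (Excursion c s.1 s.2)

variable (π : PMF (ℕ × ℕ))

theorem wordProb_excursions (c k : ℕ) (t m : ℕ → ℕ) :
    wordProb π (∑ i ∈ Finset.range (k + 1), t i) (Excursions c k t m)
      = excursionProb π c (t 0, m 0)
          * ∏ i ∈ Finset.range k, excursionProb π (m i) (t (i + 1), m (i + 1)) := by
  induction k generalizing c t m with
  | zero => simp [Excursions, excursionProb]
  | succ k ih =>
    rw [Finset.sum_range_succ', add_comm, Finset.prod_range_succ',
      mul_comm _ (excursionProb _ _ _)]
    simp only [Excursions]
    rw [wordProb_split π (dependsOn_excursion _ _ _), ih]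
    rfl

theorem excursionProb_zero (s : ℕ × ℕ) : excursionProb π 0 s = PMF.pure (0, 0) s := by
  obtain ⟨_ | T, M⟩ := s
  · simp [excursionProb, wordProb_zero, Excursion, IsFirstPassage, mutantSum, clonalSum,
      PMF.pure_apply, eq_comm]
  · rw [excursionProb, wordProb_eq_zero π fun w h => not_isFirstPassage_zero_succ h.1,
      PMF.pure_apply, if_neg (by simp)]

theorem excursionProb_succ_zero (c M : ℕ) : excursionProb π (c + 1) (0, M) = 0 :=
  wordProb_eq_zero π fun _ h => not_isFirstPassage_succ_zero h.1

theorem excursionProb_succ_succ (c T M : ℕ) :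
    excursionProb π (c + 1) (T + 1, M)
      = ∑' x, π x * if x.2 ≤ M then excursionProb π (c + x.1) (T, M - x.2) else 0 := by
  rw [excursionProb, wordProb_succ]
  refine tsum_congr fun x => ?_
  simp only [excursion_cons_succ]
  split_ifs with hM
  · simp only [hM, true_and]
    rfl
  · rw [wordProb_eq_zero π fun w h => hM h.1]

theorem excursionProb_eq_convPow {μ : PMF (ℕ × ℕ)} (hb : branchingFixedPoint π μ) (c : ℕ)
    (s : ℕ × ℕ) : excursionProb π c s = convPow μ c s := by
  obtain ⟨T, M⟩ := s
  induction T generalizing c M with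
  | zero =>
    cases c with
    | zero => exact excursionProb_zero π _
    | succ c => rw [excursionProb_succ_zero, convPow_succ_apply_zero hb]
  | succ T ih =>
    cases c with
    | zero => exact excursionProb_zero π _
    | succ c => simp only [excursionProb_succ_succ, convPow_succ_apply_succ hb, ih]

theorem tsum_excursionProb {μ : PMF (ℕ × ℕ)} (hb : branchingFixedPoint π μ) (c : ℕ) :
    ∑' s, excursionProb π c s = 1 := by
  simp only [excursionProb_eq_convPow π hb, PMF.tsum_coe]

end Excursion

theorem ae_hitsEveryLevel {Ω : Type*} [MeasurableSpace Ω] {P : Measure Ω} [IsProbabilityMeasure P]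
    {π μ : PMF (ℕ × ℕ)} (hb : branchingFixedPoint π μ) {ξ : ℕ → Ω → ℕ × ℕ}
    (hmeas : ∀ i, Measurable (ξ i)) (hindep : iIndepFun ξ P)
    (hdist : ∀ i, P.map (ξ i) = π.toMeasure) :
    ∀ᵐ ω ∂P, HitsEveryLevel (ξ · ω) := by
  refine ae_all_iff.mpr fun c => ?_
  set E : ℕ × ℕ → Set Ω := fun s => {ω | Excursion c s.1 s.2 (ξ · ω)}
  have hE : ∀ s, MeasurableSet (E s) :=
    fun s => measurableSet_setOf hmeas (dependsOn_excursion c s.1 s.2)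
  have hunion : {ω | ∃ t, IsFirstPassage c t (ξ · ω)} = ⋃ s, E s := by
    ext ω
    simp [E, Excursion]
  have hdisj : Pairwise (Function.onFun Disjoint E) := by
    refine fun s s' hne => Set.disjoint_left.mpr fun ω h h' => hne ?_
    have ht : s.1 = s'.1 := h.1.unique h'.1
    exact Prod.ext ht (h.2.symm.trans ((congrArg _ ht).trans h'.2))
  rw [ae_iff_measure_eq (hunion ▸ (MeasurableSet.iUnion hE).nullMeasurableSet), hunion,
    measure_iUnion hdisj hE, measure_univ]
  simp only [E, measure_eq_wordProb hmeas hindep hdist (dependsOn_excursion c _ _)]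
  exact tsum_excursionProb π hb c

section Exploration

variable (a : ℕ) (w : ℕ → ℕ × ℕ)

/- For `w = (ξ · ω)`: `cumMutants a w k = M̃_1 + ⋯ + M̃_k`, `cumTime a w k = T̃_0 + ⋯ + T̃_k`,
`typeSize a w k = T̃_k` and `newMutants a w k = M̃_{k+1}`. -/

noncomputable def cumMutants : ℕ → ℕ
  | 0 => 0
  | k + 1 => mutantSum w (firstPassage w (a + cumMutants k))

noncomputable def cumTime (k : ℕ) : ℕ :=
  firstPassage w (a + cumMutants a w k)

noncomputable def typeSize : ℕ → ℕ
  | 0 => cumTime a w 0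
  | k + 1 => cumTime a w (k + 1) - cumTime a w k

noncomputable def newMutants (k : ℕ) : ℕ :=
  cumMutants a w (k + 1) - cumMutants a w k

variable {a w}

theorem cumTime_zero : cumTime a w 0 = firstPassage w a := by
  rw [cumTime, cumMutants, add_zero]

theorem typeSize_zero : typeSize a w 0 = firstPassage w a := cumTime_zero

theorem newMutants_zero : newMutants a w 0 = mutantSum w (firstPassage w a) := by
  simp only [newMutants, cumMutants, add_zero, Nat.sub_zero]

theorem cumTime_eq_add {j k : ℕ} (hw : HitsEveryLevel w)
    (h : cumMutants a w j
      = mutantSum w (firstPassage w a)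
        + cumMutants (mutantSum w (firstPassage w a)) (shift (firstPassage w a) w) k) :
    cumTime a w j = firstPassage w a
      + cumTime (mutantSum w (firstPassage w a)) (shift (firstPassage w a) w) k := by
  rw [cumTime, h, hw.firstPassage_add]
  rfl

/-- Pathwise strong Markov property at `τ_0`: the exploration restarts on the shifted word, from
the mutants found in the first excursion. -/
theorem cumMutants_succ (hw : HitsEveryLevel w) (k : ℕ) :
    cumMutants a w (k + 1)
      = mutantSum w (firstPassage w a)
        + cumMutants (mutantSum w (firstPassage w a)) (shift (firstPassage w a) w) k := by
  induction k with
  | zero => simp [cumMutants]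
  | succ k ih =>
    rw [cumMutants, ← cumTime, cumTime_eq_add hw ih, mutantSum_add]
    rfl

theorem cumTime_succ (hw : HitsEveryLevel w) (k : ℕ) :
    cumTime a w (k + 1) = firstPassage w a
      + cumTime (mutantSum w (firstPassage w a)) (shift (firstPassage w a) w) k :=
  cumTime_eq_add hw (cumMutants_succ hw k)

theorem typeSize_succ (hw : HitsEveryLevel w) (k : ℕ) :
    typeSize a w (k + 1)
      = typeSize (mutantSum w (firstPassage w a)) (shift (firstPassage w a) w) k := by
  cases k with
  | zero =>
    rw [typeSize, typeSize, cumTime_succ hw, cumTime_zero (a := a), Nat.add_sub_cancel_left]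
  | succ k => simp only [typeSize, cumTime_succ hw, Nat.add_sub_add_left]

theorem newMutants_succ (hw : HitsEveryLevel w) (k : ℕ) :
    newMutants a w (k + 1)
      = newMutants (mutantSum w (firstPassage w a)) (shift (firstPassage w a) w) k := by
  simp only [newMutants, cumMutants_succ hw, Nat.add_sub_add_left]

theorem increments_eq_iff_excursions (hw : HitsEveryLevel w) (k : ℕ) (t m : ℕ → ℕ) :
    (∀ i ≤ k, typeSize a w i = t i ∧ newMutants a w i = m i) ↔ Excursions a k t m w := by
  induction k generalizing a t m w with
  | zero => simp [Excursions, hw.excursion_iff, typeSize_zero, newMutants_zero]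
  | succ k ih =>
    simp only [← Nat.lt_succ_iff]
    rw [Nat.forall_lt_succ_left]
    simp only [Excursions, hw.excursion_iff, typeSize_zero, newMutants_zero, typeSize_succ hw,
      newMutants_succ hw]
    refine and_congr_right fun ⟨ht, hm⟩ => ?_
    rw [← ht, ← hm]
    simpa only [Nat.lt_succ_iff] using ih (hw.shift_firstPassage a) _ _

end Exploration

end NeutralMutations

open NeutralMutations

theorem stmt8_general {Ω : Type*} [MeasurableSpace Ω] (P : Measure Ω) [IsProbabilityMeasure P]
    (π μ : PMF (ℕ × ℕ))
    (hb : branchingFixedPoint π μ)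
    (ξ : ℕ → Ω → ℕ × ℕ)
    (hmeas : ∀ i, Measurable (ξ i))
    (hindep : iIndepFun ξ P)
    (hdist : ∀ i, Measure.map (ξ i) P = π.toMeasure)
    (a : ℕ)
    (S : ℕ → Ω → ℤ)
    (hS : ∀ n ω, S n ω = (a : ℤ) + (∑ i ∈ Finset.range n, ((ξ i ω).1 : ℤ)) - n)
    (cM cT : ℕ → Ω → ℕ)
    (hcM0 : ∀ ω, cM 0 ω = 0)
    (hcT : ∀ k ω, cT k ω = sInf {n : ℕ | S n ω = -(cM k ω : ℤ)})
    (hcMs : ∀ k ω, cM (k + 1) ω = ∑ i ∈ Finset.range (cT k ω), (ξ i ω).2)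
    (Ttil Mtil : ℕ → Ω → ℕ)
    (hT0 : ∀ ω, Ttil 0 ω = cT 0 ω)
    (hTs : ∀ k ω, Ttil (k + 1) ω = cT (k + 1) ω - cT k ω)
    (hMs : ∀ k ω, Mtil (k + 1) ω = cM (k + 1) ω - cM k ω) :
    ∀ (k : ℕ) (t m : ℕ → ℕ),
      P {ω | ∀ i ≤ k, Ttil i ω = t i ∧ Mtil (i + 1) ω = m i}
        = (convPow μ a) (t 0, m 0)
            * ∏ i ∈ Finset.range k, (convPow μ (m i)) (t (i + 1), m (i + 1)) := by
  intro k t m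
  have hcT' : ∀ j ω, cT j ω = firstPassage (ξ · ω) (a + cM j ω) := by
    refine fun j ω => (hcT j ω).trans (congrArg sInf (Set.ext fun n => ?_))
    simp only [Set.mem_ofPred_eq, hS, clonalSum, ← Nat.cast_sum]
    omega
  have hcM' : ∀ j ω, cM j ω = cumMutants a (ξ · ω) j := by
    intro j ω
    induction j with
    | zero => exact hcM0 ω
    | succ j ih => rw [hcMs, hcT', ih]; rfl
  have hT : ∀ i ω, Ttil i ω = typeSize a (ξ · ω) i := by
    rintro (_ | i) ω <;> simp only [hT0, hTs, typeSize, cumTime, hcT', hcM']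
  have hM : ∀ i ω, Mtil (i + 1) ω = newMutants a (ξ · ω) i := by
    simp only [hMs, newMutants, hcM', implies_true]
  calc P {ω | ∀ i ≤ k, Ttil i ω = t i ∧ Mtil (i + 1) ω = m i}
      = P {ω | Excursions a k t m (ξ · ω)} := by
        refine measure_congr ((ae_hitsEveryLevel hb hmeas hindep hdist).mono fun ω hω => ?_)
        simp only [hT, hM]
        exact propext (increments_eq_iff_excursions hω k t m)
    _ = wordProb π (∑ i ∈ Finset.range (k + 1), t i) (Excursions a k t m) :=
        measure_eq_wordProb hmeas hindep hdist (dependsOn_excursions a k t m)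
    _ = _ := by simp only [wordProb_excursions, excursionProb_eq_convPow π hb]

/-- with `ς(j)` the first hitting time of `-j` by the walk
`S n = a + ξc₁ + ⋯ + ξcₙ - n` and `Σ(n) = ξm₁ + ⋯ + ξmₙ`, define recursively the cumulative
sequences `cM 0 = 0`, `cT k = ς(cM k)`, `cM (k+1) = Σ(cT k)`, and set
`T̃_0 = cT 0`, `T̃_{k+1} = cT(k+1) - cT k`, `M̃_{k+1} = cM(k+1) - cM k`.  Then the chain
`((T̃_k, M̃_{k+1}))_{k≥0}` has the same law as the chain `((T_k, M_{k+1}))_{k≥0}` of the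
Galton-Watson process with neutral mutations started from `a` ancestors, i.e. the Markov
chain with initial law `convPow μ a` and transition kernel `(t,m) ↦ convPow μ m`. -/
theorem stmt8 {Ω : Type*} [MeasurableSpace Ω] (P : Measure Ω) [IsProbabilityMeasure P]
    (π μ : PMF (ℕ × ℕ))
    (hb : branchingFixedPoint π μ)
    (hsub : ∑' kl : ℕ × ℕ, π kl * (kl.1 : ℝ≥0∞) ≤ 1)
    (ξ : ℕ → Ω → ℕ × ℕ)
    (hmeas : ∀ i, Measurable (ξ i))
    (hindep : iIndepFun ξ P)
    (hdist : ∀ i, Measure.map (ξ i) P = π.toMeasure)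
    (a : ℕ) (ha : 1 ≤ a)
    (S : ℕ → Ω → ℤ)
    (hS : ∀ n ω, S n ω = (a : ℤ) + (∑ i ∈ Finset.range n, ((ξ i ω).1 : ℤ)) - n)
    (cM cT : ℕ → Ω → ℕ)
    (hcM0 : ∀ ω, cM 0 ω = 0)
    (hcT : ∀ k ω, cT k ω = sInf {n : ℕ | S n ω = -(cM k ω : ℤ)})
    (hcMs : ∀ k ω, cM (k + 1) ω = ∑ i ∈ Finset.range (cT k ω), (ξ i ω).2)
    (Ttil Mtil : ℕ → Ω → ℕ)
    (hT0 : ∀ ω, Ttil 0 ω = cT 0 ω)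
    (hTs : ∀ k ω, Ttil (k + 1) ω = cT (k + 1) ω - cT k ω)
    (hMs : ∀ k ω, Mtil (k + 1) ω = cM (k + 1) ω - cM k ω) :
    ∀ (k : ℕ) (t m : ℕ → ℕ),
      P {ω | ∀ i ≤ k, Ttil i ω = t i ∧ Mtil (i + 1) ω = m i}
        = (convPow μ a) (t 0, m 0)
            * ∏ i ∈ Finset.range k, (convPow μ (m i)) (t (i + 1), m (i + 1)) :=
  stmt8_general P π μ hb ξ hmeas hindep hdist a S hS cM cT hcM0 hcT hcMs Ttil Mtil hT0 hTs hMs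
end

section
/- The chain ((T_k, M_k))_{k≥0} of type-k population sizes and mutant counts is Markovian, with transition probabilities P_a(T_{k+1} = n', M_{k+1} = m' | T_k = n, M_k = m) = [P_{m'}(T_0 = n') / P_m(T_0 = n)] · P_m(T_0 = n, M_1 = m'), whenever the conditioning events have positive probability. -/
open scoped ENNReal
open MeasureTheory ProbabilityTheory

/-!
The histories `((T_i, M_{i+1}))_{i ≤ k}` cut `Ω` into cylinders whose masses, read off from the
chain hypothesis, are products of transition weights summing to one. The conditioning event, and
the joint event (which is the conditioning event at `k + 1`), are unions of such cylinders indexed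
by the unobserved next mutant count `ℓ`; their masses factor as the common product of the past
transitions times `∑_ℓ P_m(T_0 = n, M_1 = ℓ)`, and the quotient is the stated formula.
-/

open Finset

theorem measure_preimage_le_tsum {Ω ι : Type*} [MeasurableSpace Ω] [Countable ι]
    (P : Measure Ω) (f : Ω → ι) (w : ι → ℝ≥0∞) (hf : ∀ i, P (f ⁻¹' {i}) ≤ w i) (S : Set ι) :
    P (f ⁻¹' S) ≤ ∑' i : S, w i := by
  rw [← Set.biUnion_preimage_singleton]
  exact (measure_biUnion_le P S.to_countable _).trans (ENNReal.tsum_le_tsum fun i => hf i)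

/-- No measurability of `f` is needed: the mass outside `f ⁻¹' S` is bounded by subadditivity,
and `∑ w = 1` leaves no room for `P (f ⁻¹' S)` to fall short of its share. -/
theorem measure_preimage_eq_tsum {Ω ι : Type*} [MeasurableSpace Ω] [Countable ι]
    (P : Measure Ω) [IsProbabilityMeasure P] (f : Ω → ι) (w : ι → ℝ≥0∞)
    (hw : ∑' i, w i = 1) (hf : ∀ i, P (f ⁻¹' {i}) ≤ w i) (S : Set ι) :
    P (f ⁻¹' S) = ∑' i : S, w i := by
  refine le_antisymm (measure_preimage_le_tsum P f w hf S) ?_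
  have hsplit : ∑' i : S, w i + ∑' i : ↥Sᶜ, w i = 1 := by
    rw [ENNReal.summable.tsum_add_tsum_compl ENNReal.summable, hw]
  have hcompl_ne_top : ∑' i : ↥Sᶜ, w i ≠ ⊤ :=
    ne_top_of_le_ne_top ENNReal.one_ne_top (hsplit ▸ le_add_self)
  refine ENNReal.le_of_add_le_add_right hcompl_ne_top ?_
  calc ∑' i : S, w i + ∑' i : ↥Sᶜ, w i = P (f ⁻¹' S ∪ f ⁻¹' Sᶜ) := by
        rw [hsplit, ← Set.preimage_union, Set.union_compl_self, Set.preimage_univ, measure_univ]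
    _ ≤ P (f ⁻¹' S) + P (f ⁻¹' Sᶜ) := measure_union_le _ _
    _ ≤ P (f ⁻¹' S) + ∑' i : ↥Sᶜ, w i := by
      gcongr; exact measure_preimage_le_tsum P f w hf _

noncomputable def pathWeight (μ : PMF (ℕ × ℕ)) (a k : ℕ) (s : Fin (k + 1) → ℕ × ℕ) : ℝ≥0∞ :=
  convPow μ a (s 0) * ∏ i : Fin k, convPow μ (s i.castSucc).2 (s i.succ)

theorem pathWeight_snoc (μ : PMF (ℕ × ℕ)) (a k : ℕ) (s : Fin (k + 1) → ℕ × ℕ) (x : ℕ × ℕ) :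
    pathWeight μ a (k + 1) (Fin.snoc s x)
      = pathWeight μ a k s * convPow μ (s (Fin.last k)).2 x := by
  simp only [pathWeight, Fin.prod_univ_castSucc, Fin.succ_castSucc, Fin.snoc_castSucc,
    Fin.succ_last, Fin.snoc_last]
  rw [show (0 : Fin (k + 2)) = Fin.castSucc 0 from rfl, Fin.snoc_castSucc, mul_assoc]

theorem tsum_pathWeight (μ : PMF (ℕ × ℕ)) (a k : ℕ) : ∑' s, pathWeight μ a k s = 1 := by
  induction k with
  | zero =>
    rw [← (Equiv.funUnique (Fin 1) (ℕ × ℕ)).symm.tsum_eq]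
    simp [pathWeight]
  | succ k ih =>
    rw [← (Fin.snocEquiv fun _ => ℕ × ℕ).tsum_eq, ENNReal.tsum_prod', ENNReal.tsum_comm]
    change ∑' (s : Fin (k + 1) → ℕ × ℕ) (x : ℕ × ℕ), pathWeight μ a (k + 1) (Fin.snoc s x) = 1
    simp only [pathWeight_snoc, ENNReal.tsum_mul_left, PMF.tsum_coe, mul_one, ih]

def history {Ω : Type*} (T M : ℕ → Ω → ℕ) (k : ℕ) (ω : Ω) : Fin (k + 1) → ℕ × ℕ :=
  fun i => (T i ω, M (i + 1) ω)

theorem measure_history_preimage_singleton {Ω : Type*} [MeasurableSpace Ω] (P : Measure Ω)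
    (μ : PMF (ℕ × ℕ)) (a : ℕ) (T M : ℕ → Ω → ℕ)
    (hchain : ∀ (k : ℕ) (t m : ℕ → ℕ),
      P {ω | ∀ i ≤ k, T i ω = t i ∧ M (i + 1) ω = m i}
        = (convPow μ a) (t 0, m 0)
            * ∏ i ∈ Finset.range k, (convPow μ (m i)) (t (i + 1), m (i + 1)))
    (k : ℕ) (s : Fin (k + 1) → ℕ × ℕ) :
    P (history T M k ⁻¹' {s}) = pathWeight μ a k s := by
  have hset : history T M k ⁻¹' {s} = {ω | ∀ i ≤ k,
      T i ω = (s (Fin.ofNat (k + 1) i)).1 ∧ M (i + 1) ω = (s (Fin.ofNat (k + 1) i)).2} := by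
    ext ω
    simp only [Set.mem_preimage, Set.mem_singleton_iff, funext_iff, history, Prod.ext_iff,
      Fin.forall_iff, Set.mem_ofPred_eq, Nat.lt_succ_iff]
    refine forall₂_congr fun i hi => ?_
    rw [show Fin.ofNat (k + 1) i = ⟨i, Nat.lt_succ_of_le hi⟩ from
      Fin.ext (Nat.mod_eq_of_lt (Nat.lt_succ_of_le hi))]
  rw [hset, hchain, pathWeight, ← Fin.prod_univ_eq_prod_range]
  have hcastSucc (i : Fin k) : Fin.ofNat (k + 1) i = i.castSucc := by ext; simp
  have hsucc (i : Fin k) : Fin.ofNat (k + 1) (i + 1) = i.succ := by ext; simp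
  simp only [hcastSucc, hsucc, Fin.ofNat_zero]

/-- Observing `(T i, M i)` for `i ≤ k` fixes every coordinate of `history T M k` except the last
mutant count `M (k + 1)`, which is left free as `ℓ`. -/
def historyWith (t mm : ℕ → ℕ) (k ℓ : ℕ) : Fin (k + 1) → ℕ × ℕ :=
  fun i => (t i, if (i : ℕ) = k then ℓ else mm (i + 1))

theorem historyWith_injective (t mm : ℕ → ℕ) (k : ℕ) : Function.Injective (historyWith t mm k) :=
  fun ℓ ℓ' h => by simpa [historyWith] using congrArg (fun s => (s (Fin.last k)).2) h

theorem historyWith_succ (t mm : ℕ → ℕ) (k ℓ : ℕ) :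
    historyWith t mm (k + 1) ℓ = Fin.snoc (historyWith t mm k (mm (k + 1))) (t (k + 1), ℓ) := by
  funext i
  induction i using Fin.lastCases with
  | last => simp [historyWith]
  | cast j =>
    simp only [historyWith, Fin.snoc_castSucc, Fin.val_castSucc, j.is_lt.ne, if_false]
    split_ifs with hj <;> simp [hj]

theorem pathWeight_historyWith (μ : PMF (ℕ × ℕ)) (t mm : ℕ → ℕ) (k ℓ : ℕ) :
    pathWeight μ (mm 0) k (historyWith t mm k ℓ)
      = (∏ i ∈ range k, convPow μ (mm i) (t i, mm (i + 1))) * convPow μ (mm k) (t k, ℓ) := by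
  induction k generalizing ℓ with
  | zero => simp [pathWeight, historyWith]
  | succ k ih =>
    rw [historyWith_succ, pathWeight_snoc, ih, prod_range_succ]
    simp [historyWith]

theorem cylinder_eq_preimage_range {Ω : Type*} (T M : ℕ → Ω → ℕ) (t mm : ℕ → ℕ)
    (hM0 : ∀ ω, M 0 ω = mm 0) (k : ℕ) :
    {ω | ∀ i ≤ k, T i ω = t i ∧ M i ω = mm i}
      = history T M k ⁻¹' Set.range (historyWith t mm k) := by
  ext ω
  simp only [Set.mem_preimage, Set.mem_range, funext_iff, history, historyWith, Prod.ext_iff,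
      Fin.forall_iff, Set.mem_ofPred_eq, Nat.lt_succ_iff]
  constructor
  · intro h
    refine ⟨M (k + 1) ω, fun i hi => ⟨(h i hi).1.symm, ?_⟩⟩
    split_ifs with hik
    · rw [hik]
    · exact (h (i + 1) (by omega)).2.symm
  · rintro ⟨ℓ, h⟩ i hi
    refine ⟨(h i hi).1.symm, ?_⟩
    cases i with
    | zero => exact hM0 ω
    | succ j => simpa [show j ≠ k by omega] using (h j (by omega)).2.symm

theorem measure_cylinder {Ω : Type*} [MeasurableSpace Ω] (P : Measure Ω) [IsProbabilityMeasure P]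
    (μ : PMF (ℕ × ℕ)) (a : ℕ) (T M : ℕ → Ω → ℕ) (hM0 : ∀ ω, M 0 ω = a)
    (hchain : ∀ (k : ℕ) (t m : ℕ → ℕ),
      P {ω | ∀ i ≤ k, T i ω = t i ∧ M (i + 1) ω = m i}
        = (convPow μ a) (t 0, m 0)
            * ∏ i ∈ Finset.range k, (convPow μ (m i)) (t (i + 1), m (i + 1)))
    (k : ℕ) (t mm : ℕ → ℕ) (hmm0 : mm 0 = a) :
    P {ω | ∀ i ≤ k, T i ω = t i ∧ M i ω = mm i}
      = (∏ i ∈ range k, convPow μ (mm i) (t i, mm (i + 1)))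
          * ∑' ℓ, convPow μ (mm k) (t k, ℓ) := by
  subst hmm0
  rw [cylinder_eq_preimage_range T M t mm hM0,
    measure_preimage_eq_tsum P _ _ (tsum_pathWeight μ (mm 0) k)
      fun s => (measure_history_preimage_singleton P μ _ T M hchain k s).le,
    tsum_range _ (historyWith_injective t mm k), ← ENNReal.tsum_mul_left]
  exact tsum_congr (pathWeight_historyWith μ t mm k)

theorem cylinder_inter_eq {Ω : Type*} (T M : ℕ → Ω → ℕ) (t mm : ℕ → ℕ) (k n' m' : ℕ) :
    {ω | ∀ i ≤ k, T i ω = t i ∧ M i ω = mm i} ∩ {ω | T (k + 1) ω = n' ∧ M (k + 1) ω = m'}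
      = {ω | ∀ i ≤ k + 1, T i ω = Function.update t (k + 1) n' i
          ∧ M i ω = Function.update mm (k + 1) m' i} := by
  have hupdate (f : ℕ → ℕ) (v x : ℕ) (hx : x ≤ k) : Function.update f (k + 1) v x = f x :=
    Function.update_of_ne (by omega) _ _
  ext ω
  simp +contextual only [Set.mem_inter_iff, Set.mem_ofPred_eq, Nat.le_succ_iff, or_imp,
    forall_and, forall_eq, Function.update_self, hupdate, Nat.succ_eq_add_one]
  tauto

/-- The conditioning is on the whole history `(T_i, M_i)_{i ≤ k}`, which expresses the Markov
property; `P_m(T_0 = n, M_1 = m') = convPow μ m (n, m')` and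
`P_m(T_0 = n) = ∑_ℓ convPow μ m (n, ℓ)`. -/
theorem stmt10_general {Ω : Type*} [MeasurableSpace Ω] (P : Measure Ω) [IsProbabilityMeasure P]
    (μ : PMF (ℕ × ℕ))
    (a : ℕ)
    (T M : ℕ → Ω → ℕ)
    (hM0 : ∀ ω, M 0 ω = a)
    (hchain : ∀ (k : ℕ) (t m : ℕ → ℕ),
      P {ω | ∀ i ≤ k, T i ω = t i ∧ M (i + 1) ω = m i}
        = (convPow μ a) (t 0, m 0)
            * ∏ i ∈ Finset.range k, (convPow μ (m i)) (t (i + 1), m (i + 1))) :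
    ∀ (k : ℕ) (t mm : ℕ → ℕ) (n' m' : ℕ), mm 0 = a →
      P {ω | ∀ i ≤ k, T i ω = t i ∧ M i ω = mm i} ≠ 0 →
      P ({ω | ∀ i ≤ k, T i ω = t i ∧ M i ω = mm i}
            ∩ {ω | T (k + 1) ω = n' ∧ M (k + 1) ω = m'})
          / P {ω | ∀ i ≤ k, T i ω = t i ∧ M i ω = mm i}
        = ((∑' ℓ : ℕ, (convPow μ m') (n', ℓ)) / (∑' ℓ : ℕ, (convPow μ (mm k)) (t k, ℓ)))
            * (convPow μ (mm k)) (t k, m') := by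
  intro k t mm n' m' hmm0 hpos
  set D := ∏ i ∈ range k, convPow μ (mm i) (t i, mm (i + 1))
  have hcyl := measure_cylinder P μ a T M hM0 hchain k t mm hmm0
  have hcyl_succ : P {ω | ∀ i ≤ k + 1, T i ω = Function.update t (k + 1) n' i
      ∧ M i ω = Function.update mm (k + 1) m' i}
        = D * convPow μ (mm k) (t k, m') * ∑' ℓ, convPow μ m' (n', ℓ) := by
    rw [measure_cylinder P μ a T M hM0 hchain _ _ _ (by simpa using hmm0), prod_range_succ,
      prod_congr rfl (g := fun i => convPow μ (mm i) (t i, mm (i + 1))) fun i hi => by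
        simp (disch := simp at hi; omega) only [Function.update_of_ne]]
    simp (disch := omega) only [Function.update_of_ne, Function.update_self]
    rfl
  have hD_ne_zero : D ≠ 0 := left_ne_zero_of_mul (hcyl ▸ hpos)
  have hD_ne_top : D ≠ ⊤ :=
    ((prod_le_one' fun i _ => PMF.coe_le_one _ _).trans_lt ENNReal.one_lt_top).ne
  rw [cylinder_inter_eq, hcyl_succ, hcyl, mul_assoc,
    ENNReal.mul_div_mul_left _ _ hD_ne_zero hD_ne_top, div_eq_mul_inv, div_eq_mul_inv]
  ring

/-- the chain `((T_k, M_k))_{k≥0}` is Markovian with transition probabilities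
`P_a(T_{k+1} = n', M_{k+1} = m' | T_k = n, M_k = m)
  = [P_{m'}(T_0 = n') / P_m(T_0 = n)] · P_m(T_0 = n, M_1 = m')`.
Here the conditioning is on the whole history `(T_i, M_i)_{i ≤ k}` (which expresses the
Markov property), `P_m(T_0 = n, M_1 = m') = convPow μ m (n, m')` and
`P_m(T_0 = n) = ∑_ℓ convPow μ m (n, ℓ)`. -/
theorem stmt10 {Ω : Type*} [MeasurableSpace Ω] (P : Measure Ω) [IsProbabilityMeasure P]
    (π μ : PMF (ℕ × ℕ))
    (hb : branchingFixedPoint π μ)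
    (a : ℕ) (ha : 1 ≤ a)
    (T M : ℕ → Ω → ℕ)
    (hM0 : ∀ ω, M 0 ω = a)
    (hchain : ∀ (k : ℕ) (t m : ℕ → ℕ),
      P {ω | ∀ i ≤ k, T i ω = t i ∧ M (i + 1) ω = m i}
        = (convPow μ a) (t 0, m 0)
            * ∏ i ∈ Finset.range k, (convPow μ (m i)) (t (i + 1), m (i + 1))) :
    ∀ (k : ℕ) (t mm : ℕ → ℕ) (n' m' : ℕ), mm 0 = a →
      P {ω | ∀ i ≤ k, T i ω = t i ∧ M i ω = mm i} ≠ 0 →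
      P ({ω | ∀ i ≤ k, T i ω = t i ∧ M i ω = mm i}
            ∩ {ω | T (k + 1) ω = n' ∧ M (k + 1) ω = m'})
          / P {ω | ∀ i ≤ k, T i ω = t i ∧ M i ω = mm i}
        = ((∑' ℓ : ℕ, (convPow μ m') (n', ℓ)) / (∑' ℓ : ℕ, (convPow μ (mm k)) (t k, ℓ)))
            * (convPow μ (mm k)) (t k, m') :=
  stmt10_general P μ a T M hM0 hchain
end
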